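/- arXiv:math/9909149 — 6 statements merged into one kernel-verified Lean document; each statement's English description precedes it below -/
import Mathlib

section
/- Let A be an algebraically simple Banach algebra over ℂ of dimension greater than one. Then the topology τ_∞ is Hausdorff on Id(A). -/
set_option linter.unusedSectionVars false

open Filter Topology

section BanachAlgebraPrelude

variable (A : Type*) [NonUnitalNormedRing A] [NormedSpace ℂ A]
  [IsScalarTower ℂ A A] [SMulCommClass ℂ A A] [CompleteSpace A]

/-- `I` is a two-sided ideal of `A` (a `ℂ`-subspace closed under multiplication by
arbitrary elements of `A` on both sides); not necessarily topologically closed. -/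
def IsIdealSet (I : Set A) : Prop :=
  (0 : A) ∈ I ∧ (∀ x ∈ I, ∀ y ∈ I, x + y ∈ I) ∧
    (∀ (c : ℂ), ∀ x ∈ I, c • x ∈ I) ∧
    ∀ x ∈ I, ∀ a : A, a * x ∈ I ∧ x * a ∈ I

/-- `I` is a closed two-sided ideal of `A`. -/
def IsClosedIdeal (I : Set A) : Prop := IsClosed I ∧ IsIdealSet A I

/-- `Id(A)`: the set of closed two-sided ideals of `A` (including `A` itself). -/
abbrev ClosedIdeals := {I : Set A // IsClosedIdeal A I}

/-- The quotient norm `‖a + I‖ = inf {‖a - m‖ : m ∈ I}`. -/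
noncomputable def qnorm (a : A) (I : Set A) : ℝ := Metric.infDist a I

/-- `S_k(A)`: the set of algebra seminorms `ρ` on `A` with `ρ(a) ≤ k‖a‖`,
viewed as a subset of `A → ℝ` (so that it carries the topology of pointwise
convergence). -/
def SK (k : ℕ) : Set (A → ℝ) :=
  {ρ | (∀ a b, ρ (a + b) ≤ ρ a + ρ b) ∧ (∀ (c : ℂ) (a : A), ρ (c • a) = ‖c‖ * ρ a) ∧
    (∀ a b, ρ (a * b) ≤ ρ a * ρ b) ∧ ∀ a, ρ a ≤ k * ‖a‖}

theorem sk_ker_isClosedIdeal {k : ℕ} {ρ : A → ℝ} (h : ρ ∈ SK A k) :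
    IsClosedIdeal A {a | ρ a = 0} := by
  obtain ⟨h1, h2, h3, h4⟩ := h
  have hz : ρ 0 = 0 := by
    have := h2 0 0
    simpa using this
  have hnn : ∀ a, 0 ≤ ρ a := by
    intro a
    have hneg : ρ (-a) = ρ a := by
      have := h2 (-1) a
      simpa using this
    have h' := h1 a (-a)
    rw [show a + -a = (0 : A) by abel, hz, hneg] at h'
    linarith
  have key : ∀ a b : A, ρ a - ρ b ≤ (k : ℝ) * ‖a - b‖ := by
    intro a b
    have e1 := h1 b (a - b)
    rw [show b + (a - b) = a by abel] at e1
    have e2 := h4 (a - b)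
    linarith
  have hlip : LipschitzWith (k : NNReal) ρ := by
    apply LipschitzWith.of_dist_le_mul
    intro a b
    rw [Real.dist_eq, dist_eq_norm, abs_sub_le_iff]
    constructor
    · have := key a b; push_cast; linarith
    · have := key b a; rw [norm_sub_rev] at this; push_cast; linarith
  refine ⟨isClosed_eq hlip.continuous continuous_const, hz, ?_, ?_, ?_⟩
  · intro x hx y hy
    have hx' : ρ x = 0 := hx
    have hy' : ρ y = 0 := hy
    have hle : ρ (x + y) ≤ 0 := by
      have := h1 x y
      rw [hx', hy'] at this
      linarith
    exact le_antisymm hle (hnn _)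
  · intro c x hx
    have hx' : ρ x = 0 := hx
    show ρ (c • x) = 0
    rw [h2 c x, hx', mul_zero]
  · intro x hx a
    have hx' : ρ x = 0 := hx
    constructor
    · have hle : ρ (a * x) ≤ 0 := by
        have := h3 a x
        rw [hx', mul_zero] at this
        linarith
      exact le_antisymm hle (hnn _)
    · have hle : ρ (x * a) ≤ 0 := by
        have := h3 x a
        rw [hx', zero_mul] at this
        linarith
      exact le_antisymm hle (hnn _)

/-- The kernel map `κ_k : S_k(A) → Id(A)`. -/
noncomputable def kerSK (k : ℕ) (ρ : SK A k) : ClosedIdeals A :=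
  ⟨{a | ρ.1 a = 0}, sk_ker_isClosedIdeal A ρ.2⟩

/-- `τ_k`: the quotient topology on `Id(A)` induced by `κ_k`. -/
noncomputable def tauK (k : ℕ) : TopologicalSpace (ClosedIdeals A) :=
  TopologicalSpace.coinduced (kerSK A k) inferInstance

/-- `τ_∞`: the topology on `Id(A)` whose open sets are exactly the sets open in `τ_k`
for every `k`. -/
noncomputable def tauInfty : TopologicalSpace (ClosedIdeals A) := ⨆ k, tauK A k

/-- A character of `A`: a nonzero continuous `ℂ`-algebra homomorphism `A → ℂ`. -/
def IsCharacter (φ : A → ℂ) : Prop :=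
  φ ≠ 0 ∧ Continuous φ ∧ (∀ x y, φ (x + y) = φ x + φ y) ∧
    (∀ (c : ℂ) (x : A), φ (c • x) = c * φ x) ∧ ∀ x y, φ (x * y) = φ x * φ y

/-- The character space of `A`, as a subset of `A → ℂ`; its subspace topology is
the topology of pointwise convergence, i.e. the (relative weak-*) Gelfand topology. -/
abbrev Characters := {φ : A → ℂ // IsCharacter A φ}

/-- The kernel of a character, as a subset of `A`. -/
def charKer (φ : A → ℂ) : Set A := {a | φ a = 0}

theorem charKer_isClosedIdeal {φ : A → ℂ} (h : IsCharacter A φ) :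
    IsClosedIdeal A (charKer A φ) := by
  obtain ⟨-, hc, hadd, hsmul, hmul⟩ := h
  have hz : φ 0 = 0 := by
    have := hsmul 0 0
    simpa using this
  refine ⟨isClosed_eq hc continuous_const, hz, ?_, ?_, ?_⟩
  · intro x hx y hy
    have hx' : φ x = 0 := hx
    have hy' : φ y = 0 := hy
    show φ (x + y) = 0
    rw [hadd, hx', hy', add_zero]
  · intro c x hx
    have hx' : φ x = 0 := hx
    show φ (c • x) = 0
    rw [hsmul, hx', mul_zero]
  · intro x hx a
    have hx' : φ x = 0 := hx
    exact ⟨by show φ (a * x) = 0; rw [hmul, hx', mul_zero],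
      by show φ (x * a) = 0; rw [hmul, hx', zero_mul]⟩

/-- The kernel of a character, as an element of `Id(A)`. -/
noncomputable def charKerIdeal (φ : Characters A) : ClosedIdeals A :=
  ⟨charKer A φ.1, charKer_isClosedIdeal A φ.2⟩

/-- `Prim(A) = {ker φ : φ a character of A}` (also called `M′`),
as a subset of `Id(A)`. -/
def PrimSet : Set (ClosedIdeals A) := Set.range (charKerIdeal A)

/-- The map `φ ↦ ker φ` from the character space onto `Prim(A)`. -/
noncomputable def gelfandMap (φ : Characters A) : PrimSet A :=
  ⟨charKerIdeal A φ, ⟨φ, rfl⟩⟩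

/-- The Gelfand topology on `Prim(A)`, transported from the character space via
`φ ↦ ker φ`. -/
noncomputable def gelfandTop : TopologicalSpace (PrimSet A) :=
  TopologicalSpace.coinduced (gelfandMap A) inferInstance

/-- The lower topology `τ_w` on `Id(A)`, generated by the sets
`{I : I ⊉ J}`; its restriction to any set of (prime) ideals is the
hull-kernel topology. -/
def tauW : TopologicalSpace (ClosedIdeals A) :=
  TopologicalSpace.generateFrom {U | ∃ J : ClosedIdeals A, U = {I | ¬ J.1 ⊆ I.1}}

/-- The restriction of a topology on `Id(A)` to a subset `X ⊆ Id(A)`. -/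
def restrictTop (X : Set (ClosedIdeals A)) (t : TopologicalSpace (ClosedIdeals A)) :
    TopologicalSpace X :=
  TopologicalSpace.induced Subtype.val t

/-- `P` is a proper closed prime two-sided ideal of `A`: for all closed two-sided
ideals `I`, `J`, if `I·J ⊆ P` then `I ⊆ P` or `J ⊆ P`. -/
def IsPrimeIdealSet (P : Set A) : Prop :=
  IsClosedIdeal A P ∧ P ≠ Set.univ ∧
    ∀ I J : ClosedIdeals A, (∀ x ∈ I.1, ∀ y ∈ J.1, x * y ∈ P) → I.1 ⊆ P ∨ J.1 ⊆ P

/-- `Prime(A)`: the set of proper closed prime two-sided ideals of `A`. -/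
def PrimeSet : Set (ClosedIdeals A) := {P | IsPrimeIdealSet A P.1}

/-- A topology `t` on a subset `X ⊆ Id(A)` has the normality property if every
net converging in `t` has the normality property with respect to each of its
limits: whenever `I_α → I (t)` and `a ∉ I`, `liminf_α ‖a + I_α‖ > 0`. -/
def HasNormality (X : Set (ClosedIdeals A)) (t : TopologicalSpace X) : Prop :=
  ∀ (D : Type) [Preorder D], (atTop : Filter D).NeBot →
    ∀ (net : D → X) (I : X),
      Filter.Tendsto net atTop (@nhds _ t I) →
        ∀ a : A, a ∉ I.1.1 →
          0 < Filter.liminf (fun d => qnorm A a (net d).1.1) atTop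


section TauInftyAuxiliary

variable {A}

namespace TauInftyAux

/-! ### Basic facts about elements of `S_k(A)` -/

theorem sk_zero {k : ℕ} {ρ : A → ℝ} (h : ρ ∈ SK A k) : ρ 0 = 0 := by
  have := h.2.1 0 0
  simpa using this

theorem sk_nonneg {k : ℕ} {ρ : A → ℝ} (h : ρ ∈ SK A k) (x : A) : 0 ≤ ρ x := by
  obtain ⟨h1, h2, h3, h4⟩ := h
  have hz : ρ 0 = 0 := by have := h2 0 0; simpa using this
  have hneg : ρ (-x) = ρ x := by
    have := h2 (-1) x; simpa using this
  have h' := h1 x (-x)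
  rw [show x + -x = (0 : A) by abel, hz, hneg] at h'
  linarith

theorem sk_continuous {k : ℕ} {ρ : A → ℝ} (h : ρ ∈ SK A k) : Continuous ρ := by
  obtain ⟨h1, h2, h3, h4⟩ := h
  have key : ∀ a b : A, ρ a - ρ b ≤ (k : ℝ) * ‖a - b‖ := by
    intro a b
    have e1 := h1 b (a - b)
    rw [show b + (a - b) = a by abel] at e1
    have e2 := h4 (a - b)
    linarith
  have hlip : LipschitzWith (k : NNReal) ρ := by
    apply LipschitzWith.of_dist_le_mul
    intro a b
    rw [Real.dist_eq, dist_eq_norm, abs_sub_le_iff]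
    constructor
    · have := key a b; push_cast; linarith
    · have := key b a; rw [norm_sub_rev] at this; push_cast; linarith
  exact hlip.continuous

theorem sk_real_smul {k : ℕ} {ρ : A → ℝ} (h : ρ ∈ SK A k) (c : ℝ) (hc : 0 ≤ c) (x : A) :
    ρ ((c : ℂ) • x) = c * ρ x := by
  rw [h.2.1 (c : ℂ) x, Complex.norm_real, Real.norm_eq_abs, abs_of_nonneg hc]

/-! ### The "operator seminorm" of an element of `S_k(A)` -/

noncomputable def skNorm (ρ : A → ℝ) : ℝ := sSup (ρ '' Metric.closedBall 0 1)

theorem skNorm_bddAbove {k : ℕ} {ρ : A → ℝ} (h : ρ ∈ SK A k) :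
    BddAbove (ρ '' Metric.closedBall 0 1) := by
  refine ⟨(k : ℝ), ?_⟩
  rintro - ⟨x, hx, rfl⟩
  have hx1 : ‖x‖ ≤ 1 := by simpa [Metric.mem_closedBall, dist_eq_norm] using hx
  calc ρ x ≤ (k : ℝ) * ‖x‖ := h.2.2.2 x
    _ ≤ (k : ℝ) * 1 := by
        apply mul_le_mul_of_nonneg_left hx1 (by positivity)
    _ = (k : ℝ) := mul_one _

theorem skNorm_nonneg {k : ℕ} {ρ : A → ℝ} (h : ρ ∈ SK A k) : 0 ≤ skNorm ρ := by
  have h0 : ρ 0 ∈ ρ '' Metric.closedBall 0 1 :=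
    ⟨0, Metric.mem_closedBall_self zero_le_one, rfl⟩
  have := le_csSup (skNorm_bddAbove h) h0
  rw [sk_zero h] at this
  exact this

theorem sk_le_skNorm {k : ℕ} {ρ : A → ℝ} (h : ρ ∈ SK A k) (z : A) :
    ρ z ≤ skNorm ρ * ‖z‖ := by
  rcases eq_or_ne z 0 with rfl | hz
  · rw [sk_zero h, norm_zero, mul_zero]
  · have hnz : (0 : ℝ) < ‖z‖ := norm_pos_iff.mpr hz
    set u : A := ((‖z‖⁻¹ : ℝ) : ℂ) • z with hu
    have hu1 : u ∈ Metric.closedBall (0 : A) 1 := by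
      simp only [Metric.mem_closedBall, dist_eq_norm, sub_zero, hu, norm_smul,
        Complex.norm_real, Real.norm_eq_abs, abs_of_nonneg (inv_nonneg.mpr hnz.le)]
      rw [inv_mul_cancel₀ hnz.ne']
    have hru : ρ u ≤ skNorm ρ := le_csSup (skNorm_bddAbove h) ⟨u, hu1, rfl⟩
    have hzu : z = ((‖z‖ : ℝ) : ℂ) • u := by
      rw [hu, smul_smul, ← Complex.ofReal_mul, mul_inv_cancel₀ hnz.ne']
      simp
    calc ρ z = ‖z‖ * ρ u := by
          conv_lhs => rw [hzu]
          exact sk_real_smul h ‖z‖ hnz.le u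
      _ ≤ skNorm ρ * ‖z‖ := by
          rw [mul_comm]
          exact mul_le_mul_of_nonneg_right hru hnz.le

theorem skNorm_le {k : ℕ} {ρ : A → ℝ} (h : ρ ∈ SK A k) {c : ℝ} (hc : 0 ≤ c)
    (hb : ∀ z : A, ρ z ≤ c * ‖z‖) : skNorm ρ ≤ c := by
  have hne : (ρ '' Metric.closedBall 0 1).Nonempty :=
    ⟨ρ 0, 0, Metric.mem_closedBall_self zero_le_one, rfl⟩
  apply csSup_le hne
  rintro - ⟨x, hx, rfl⟩
  have hx1 : ‖x‖ ≤ 1 := by simpa [Metric.mem_closedBall, dist_eq_norm] using hx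
  calc ρ x ≤ c * ‖x‖ := hb x
    _ ≤ c * 1 := mul_le_mul_of_nonneg_left hx1 hc
    _ = c := mul_one _

theorem sk_eq_zero_of_skNorm_eq_zero {k : ℕ} {ρ : A → ℝ} (h : ρ ∈ SK A k)
    (hm : skNorm ρ ≤ 0) (z : A) : ρ z = 0 := by
  have h1 := sk_le_skNorm h z
  have h2 := sk_nonneg h z
  have h3 : skNorm ρ * ‖z‖ ≤ 0 := mul_nonpos_of_nonpos_of_nonneg hm (norm_nonneg z)
  linarith

/-! ### The Baire category (Zabreiko-type) lemma -/

theorem ball_subset_closure (S : ℝ → Set A)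
    (hmono : ∀ {c d : ℝ}, c ≤ d → S c ⊆ S d)
    (hadd : ∀ {c d : ℝ} {x y : A}, x ∈ S c → y ∈ S d → x + y ∈ S (c + d))
    (hsmul : ∀ (t : ℂ) {c : ℝ} {x : A}, x ∈ S c → t • x ∈ S (‖t‖ * c))
    (habs : ∀ z : A, ∃ c : ℝ, z ∈ S c) :
    ∃ ε : ℝ, 0 < ε ∧ Metric.ball (0 : A) ε ⊆ closure (S 1) := by
  -- Baire category
  have hcover : (⋃ n : ℕ, closure (S (n : ℝ))) = Set.univ := by
    rw [Set.eq_univ_iff_forall]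
    intro z
    obtain ⟨c, hc⟩ := habs z
    exact Set.mem_iUnion.mpr ⟨⌈c⌉₊, subset_closure (hmono (Nat.le_ceil c) hc)⟩
  obtain ⟨n, x, hx⟩ :=
    nonempty_interior_of_iUnion_of_closed (fun n : ℕ => isClosed_closure) hcover
  obtain ⟨r, hr, hball⟩ := Metric.isOpen_iff.mp isOpen_interior x hx
  have hballn : Metric.ball x r ⊆ closure (S (n : ℝ)) :=
    hball.trans interior_subset
  -- symmetrize : ball 0 r ⊆ closure (S (n + n))
  have hsym : Metric.ball (0 : A) r ⊆ closure (S ((n : ℝ) + n)) := by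
    intro h hh
    rw [Metric.mem_ball, dist_eq_norm, sub_zero] at hh
    have hxh : x + h ∈ closure (S (n : ℝ)) := by
      apply hballn
      rw [Metric.mem_ball, dist_eq_norm]
      simpa using hh
    have hxx : x ∈ closure (S (n : ℝ)) := hballn (Metric.mem_ball_self hr)
    obtain ⟨u, hu, hul⟩ := mem_closure_iff_seq_limit.mp hxh
    obtain ⟨v, hv, hvl⟩ := mem_closure_iff_seq_limit.mp hxx
    apply mem_closure_iff_seq_limit.mpr
    refine ⟨fun i => u i + (-1 : ℂ) • v i, fun i => ?_, ?_⟩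
    · have := hadd (hu i) (hsmul (-1 : ℂ) (hv i))
      have he : (n : ℝ) + ‖(-1 : ℂ)‖ * n = (n : ℝ) + n := by
        simp
      rwa [he] at this
    · have : Filter.Tendsto (fun i => u i - v i) Filter.atTop (nhds ((x + h) - x)) :=
        hul.sub hvl
      simp only [neg_one_smul]
      simpa [sub_eq_add_neg] using this
  -- rescale
  set N : ℕ := 2 * n + 1 with hN
  have hNpos : (0 : ℝ) < N := by positivity
  have hmono2 : closure (S ((n : ℝ) + n)) ⊆ closure (S (N : ℝ)) := by
    apply closure_mono
    apply hmono
    push_cast [hN]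
    linarith
  refine ⟨r / N, by positivity, ?_⟩
  intro w hw
  rw [Metric.mem_ball, dist_eq_norm, sub_zero] at hw
  have hh : (N : ℂ) • w ∈ closure (S (N : ℝ)) := by
    apply hmono2
    apply hsym
    rw [Metric.mem_ball, dist_eq_norm, sub_zero, norm_smul]
    have : ‖(N : ℂ)‖ = (N : ℝ) := by
      simp
    rw [this]
    calc (N : ℝ) * ‖w‖ < (N : ℝ) * (r / N) := by
          exact mul_lt_mul_of_pos_left hw hNpos
      _ = r := by field_simp
  obtain ⟨u, hu, hul⟩ := mem_closure_iff_seq_limit.mp hh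
  apply mem_closure_iff_seq_limit.mpr
  refine ⟨fun i => ((N : ℂ))⁻¹ • u i, fun i => ?_, ?_⟩
  · have := hsmul ((N : ℂ))⁻¹ (hu i)
    have he : ‖((N : ℂ))⁻¹‖ * (N : ℝ) = 1 := by
      rw [norm_inv]
      have : ‖(N : ℂ)‖ = (N : ℝ) := by simp
      rw [this, inv_mul_cancel₀ hNpos.ne']
    rwa [he] at this
  · have hlim : Filter.Tendsto (fun i => ((N : ℂ))⁻¹ • u i) Filter.atTop
        (nhds (((N : ℂ))⁻¹ • ((N : ℂ) • w))) := hul.const_smul _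
    have : ((N : ℂ))⁻¹ • ((N : ℂ) • w) = w := by
      rw [smul_smul, inv_mul_cancel₀, one_smul]
      exact_mod_cast hNpos.ne'
    rwa [this] at hlim

/-- If `ρ` is bounded by `B` on a set whose closure contains a ball of radius `ε`
around the origin, then `ρ ≤ (2B/ε)‖·‖`. -/
theorem rho_le_of_ball {k : ℕ} {ρ : A → ℝ} (h : ρ ∈ SK A k) {s : Set A} {ε B : ℝ}
    (hε : 0 < ε) (hB : 0 ≤ B) (hsub : Metric.ball (0 : A) ε ⊆ closure s)
    (hbd : ∀ x ∈ s, ρ x ≤ B) (z : A) : ρ z ≤ (2 * B / ε) * ‖z‖ := by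
  have hcl : closure s ⊆ {x : A | ρ x ≤ B} :=
    closure_minimal hbd (isClosed_le (sk_continuous h) continuous_const)
  have hball : ∀ w : A, ‖w‖ < ε → ρ w ≤ B := fun w hw =>
    hcl (hsub (by simpa [Metric.mem_ball, dist_eq_norm] using hw))
  rcases eq_or_ne z 0 with rfl | hz
  · rw [sk_zero h, norm_zero, mul_zero]
  · have hnz : (0 : ℝ) < ‖z‖ := norm_pos_iff.mpr hz
    set c : ℝ := ε / (2 * ‖z‖) with hc
    have hcpos : 0 < c := by positivity
    have hwn : ‖((c : ℝ) : ℂ) • z‖ < ε := by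
      rw [norm_smul, Complex.norm_real, Real.norm_eq_abs, abs_of_pos hcpos, hc]
      rw [div_mul_eq_mul_div, mul_comm]
      rw [div_lt_iff₀ (by positivity)]
      nlinarith
    have := hball _ hwn
    rw [sk_real_smul h c hcpos.le] at this
    rw [div_mul_eq_mul_div, ← sub_nonneg]
    have h2 : ρ z ≤ B / c := by
      rw [le_div_iff₀ hcpos, mul_comm]
      exact this
    have hceq : B / c = 2 * B * ‖z‖ / ε := by
      rw [hc]
      field_simp
    rw [hceq] at h2
    linarith

/-! ### The set of sums of products -/

def cost1 (l : List (A × A)) : ℝ := (l.map fun p => ‖p.1‖ * ‖p.2‖).sum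

def val1 (l : List (A × A)) : A := (l.map fun p => p.1 * p.2).sum

theorem cost1_nonneg (l : List (A × A)) : 0 ≤ cost1 l := by
  induction l with
  | nil => simp [cost1]
  | cons p l ih =>
    simp only [cost1, List.map_cons, List.sum_cons] at *
    positivity

theorem cost1_append (l l' : List (A × A)) : cost1 (l ++ l') = cost1 l + cost1 l' := by
  simp [cost1]

theorem val1_append (l l' : List (A × A)) : val1 (l ++ l') = val1 l + val1 l' := by
  simp [val1]

theorem val1_smul (t : ℂ) (l : List (A × A)) :
    val1 (l.map fun p => (t • p.1, p.2)) = t • val1 l := by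
  induction l with
  | nil => simp [val1]
  | cons p l ih =>
    simp only [val1, List.map_cons, List.sum_cons] at *
    rw [ih, smul_add, smul_mul_assoc]

theorem cost1_smul (t : ℂ) (l : List (A × A)) :
    cost1 (l.map fun p => (t • p.1, p.2)) = ‖t‖ * cost1 l := by
  induction l with
  | nil => simp [cost1]
  | cons p l ih =>
    simp only [cost1, List.map_cons, List.sum_cons] at *
    rw [ih, norm_smul]
    ring

theorem val1_mul_left (x : A) (l : List (A × A)) :
    val1 (l.map fun p => (x * p.1, p.2)) = x * val1 l := by
  induction l with
  | nil => simp [val1]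
  | cons p l ih =>
    simp only [val1, List.map_cons, List.sum_cons] at *
    rw [ih, mul_add, mul_assoc]

theorem cost1_mul_left (x : A) (l : List (A × A)) :
    cost1 (l.map fun p => (x * p.1, p.2)) ≤ ‖x‖ * cost1 l := by
  induction l with
  | nil => simp [cost1]
  | cons p l ih =>
    simp only [cost1, List.map_cons, List.sum_cons] at *
    have h1 : ‖x * p.1‖ * ‖p.2‖ ≤ ‖x‖ * ‖p.1‖ * ‖p.2‖ :=
      mul_le_mul_of_nonneg_right (norm_mul_le x p.1) (norm_nonneg p.2)
    nlinarith [norm_nonneg x, cost1_nonneg l]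

theorem val1_mul_right (x : A) (l : List (A × A)) :
    val1 (l.map fun p => (p.1, p.2 * x)) = val1 l * x := by
  induction l with
  | nil => simp [val1]
  | cons p l ih =>
    simp only [val1, List.map_cons, List.sum_cons] at *
    rw [ih, add_mul, mul_assoc]

theorem cost1_mul_right (x : A) (l : List (A × A)) :
    cost1 (l.map fun p => (p.1, p.2 * x)) ≤ cost1 l * ‖x‖ := by
  induction l with
  | nil => simp [cost1]
  | cons p l ih =>
    simp only [cost1, List.map_cons, List.sum_cons] at *
    have h1 : ‖p.1‖ * ‖p.2 * x‖ ≤ ‖p.1‖ * (‖p.2‖ * ‖x‖) :=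
      mul_le_mul_of_nonneg_left (norm_mul_le p.2 x) (norm_nonneg p.1)
    nlinarith [norm_nonneg x, cost1_nonneg l]

def SOne (c : ℝ) : Set A := {w | ∃ l : List (A × A), cost1 l ≤ c ∧ w = val1 l}

theorem sone_mono {c d : ℝ} (h : c ≤ d) : (SOne c : Set A) ⊆ SOne d := by
  rintro w ⟨l, hl, rfl⟩
  exact ⟨l, hl.trans h, rfl⟩

theorem sone_add {c d : ℝ} {x y : A} (hx : x ∈ SOne c) (hy : y ∈ SOne d) :
    x + y ∈ SOne (c + d) := by
  obtain ⟨l, hl, rfl⟩ := hx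
  obtain ⟨l', hl', rfl⟩ := hy
  exact ⟨l ++ l', by rw [cost1_append]; linarith, (val1_append l l').symm⟩

theorem sone_smul (t : ℂ) {c : ℝ} {x : A} (hx : x ∈ SOne c) :
    t • x ∈ SOne (‖t‖ * c) := by
  obtain ⟨l, hl, rfl⟩ := hx
  refine ⟨l.map fun p => (t • p.1, p.2), ?_, (val1_smul t l).symm⟩
  rw [cost1_smul]
  exact mul_le_mul_of_nonneg_left hl (norm_nonneg t)

/-! ### Nontriviality consequences of simplicity -/

theorem exists_ne_zero (hdim : 1 < Module.rank ℂ A) : ∃ v : A, v ≠ 0 := by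
  by_contra hcon
  push_neg at hcon
  haveI : Subsingleton A := ⟨fun a b => by rw [hcon a, hcon b]⟩
  rw [rank_subsingleton'] at hdim
  exact absurd hdim (by norm_num)

theorem exists_prod_ne_zero
    (hsimple : ∀ I : Set A, IsIdealSet A I → I = {0} ∨ I = Set.univ)
    (hdim : 1 < Module.rank ℂ A) : ∃ x y : A, x * y ≠ 0 := by
  by_contra hcon
  push_neg at hcon
  obtain ⟨v, hv⟩ := exists_ne_zero hdim
  set R : Set A := Set.range (fun c : ℂ => c • v) with hR
  have hRideal : IsIdealSet A R := by
    refine ⟨⟨0, by simp⟩, ?_, ?_, ?_⟩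
    · rintro - ⟨c, rfl⟩ - ⟨d, rfl⟩
      exact ⟨c + d, by simp [add_smul]⟩
    · rintro c - ⟨d, rfl⟩
      exact ⟨c * d, by simp [mul_smul]⟩
    · rintro - ⟨c, rfl⟩ a
      constructor
      · exact ⟨0, by simp [mul_smul_comm, hcon a v]⟩
      · exact ⟨0, by simp [smul_mul_assoc, hcon v a]⟩
  rcases hsimple R hRideal with h | h
  · have : v ∈ R := ⟨1, one_smul _ _⟩
    rw [h] at this
    exact hv this
  · have hle : Module.rank ℂ A ≤ 1 := by
      rw [rank_le_one_iff]
      refine ⟨v, fun w => ?_⟩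
      have : w ∈ R := by rw [h]; trivial
      obtain ⟨c, hc⟩ := this
      exact ⟨c, hc⟩
    exact absurd hdim (not_lt.mpr hle)

theorem sone_absorb
    (hsimple : ∀ I : Set A, IsIdealSet A I → I = {0} ∨ I = Set.univ)
    (hdim : 1 < Module.rank ℂ A) (z : A) : ∃ c : ℝ, z ∈ SOne c := by
  set J : Set A := {w | ∃ c : ℝ, w ∈ SOne c} with hJ
  have hJideal : IsIdealSet A J := by
    refine ⟨⟨0, [], by simp [cost1, val1]⟩, ?_, ?_, ?_⟩
    · rintro x ⟨c, hx⟩ y ⟨d, hy⟩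
      exact ⟨c + d, sone_add hx hy⟩
    · rintro t x ⟨c, hx⟩
      exact ⟨‖t‖ * c, sone_smul t hx⟩
    · rintro x ⟨c, l, hl, rfl⟩ a
      constructor
      · refine ⟨‖a‖ * c, l.map fun p => (a * p.1, p.2), ?_, (val1_mul_left a l).symm⟩
        exact (cost1_mul_left a l).trans (mul_le_mul_of_nonneg_left hl (norm_nonneg a))
      · refine ⟨c * ‖a‖, l.map fun p => (p.1, p.2 * a), ?_, (val1_mul_right a l).symm⟩
        exact (cost1_mul_right a l).trans (mul_le_mul_of_nonneg_right hl (norm_nonneg a))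
  rcases hsimple J hJideal with h | h
  · exfalso
    obtain ⟨x, y, hxy⟩ := exists_prod_ne_zero hsimple hdim
    have : x * y ∈ J := ⟨‖x‖ * ‖y‖, [(x, y)], by simp [cost1], by simp [val1]⟩
    rw [h] at this
    exact hxy this
  · have : z ∈ J := by rw [h]; trivial
    exact this

theorem rho_val1 {k : ℕ} {ρ : A → ℝ} (h : ρ ∈ SK A k) (l : List (A × A)) :
    ρ (val1 l) ≤ skNorm ρ ^ 2 * cost1 l := by
  induction l with
  | nil => simp [val1, cost1, sk_zero h]
  | cons p l ih =>
    have h1 : ρ (val1 (p :: l)) ≤ ρ (p.1 * p.2) + ρ (val1 l) := by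
      have := h.1 (p.1 * p.2) (val1 l)
      simpa [val1] using this
    have h2 : ρ (p.1 * p.2) ≤ ρ p.1 * ρ p.2 := h.2.2.1 p.1 p.2
    have h3 : ρ p.1 ≤ skNorm ρ * ‖p.1‖ := sk_le_skNorm h p.1
    have h4 : ρ p.2 ≤ skNorm ρ * ‖p.2‖ := sk_le_skNorm h p.2
    have hcost : cost1 (p :: l) = ‖p.1‖ * ‖p.2‖ + cost1 l := by simp [cost1]
    rw [hcost]
    have hm := skNorm_nonneg h
    have hr1 := sk_nonneg h p.1
    have hr2 := sk_nonneg h p.2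
    nlinarith [norm_nonneg p.1, norm_nonneg p.2]

/-! ### The set generated by a single element `a` -/

def val2 (a : A) (l : List (A × A)) : A := (l.map fun p => p.1 * a * p.2).sum

theorem val2_append (a : A) (l l' : List (A × A)) :
    val2 a (l ++ l') = val2 a l + val2 a l' := by simp [val2]

theorem val2_smul (a : A) (t : ℂ) (l : List (A × A)) :
    val2 a (l.map fun p => (t • p.1, p.2)) = t • val2 a l := by
  induction l with
  | nil => simp [val2]
  | cons p l ih =>
    simp only [val2, List.map_cons, List.sum_cons] at *
    rw [ih, smul_add, smul_mul_assoc, smul_mul_assoc]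

theorem val2_mul_left (a x : A) (l : List (A × A)) :
    val2 a (l.map fun p => (x * p.1, p.2)) = x * val2 a l := by
  induction l with
  | nil => simp [val2]
  | cons p l ih =>
    simp only [val2, List.map_cons, List.sum_cons] at *
    rw [ih, mul_add, mul_assoc, mul_assoc, mul_assoc]

theorem val2_mul_right (a x : A) (l : List (A × A)) :
    val2 a (l.map fun p => (p.1, p.2 * x)) = val2 a l * x := by
  induction l with
  | nil => simp [val2]
  | cons p l ih =>
    simp only [val2, List.map_cons, List.sum_cons] at *
    rw [ih, add_mul, mul_assoc (p.1 * a) p.2 x]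

def STwo (a : A) (c : ℝ) : Set A :=
  {w | ∃ (t : ℂ) (u v : A) (l : List (A × A)),
    ‖t‖ + ‖u‖ + ‖v‖ + cost1 l ≤ c ∧ w = t • a + u * a + a * v + val2 a l}

theorem stwo_mono (a : A) {c d : ℝ} (h : c ≤ d) : STwo a c ⊆ STwo a d := by
  rintro w ⟨t, u, v, l, hl, rfl⟩
  exact ⟨t, u, v, l, hl.trans h, rfl⟩

theorem stwo_add (a : A) {c d : ℝ} {x y : A} (hx : x ∈ STwo a c) (hy : y ∈ STwo a d) :
    x + y ∈ STwo a (c + d) := by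
  obtain ⟨t, u, v, l, hl, rfl⟩ := hx
  obtain ⟨t', u', v', l', hl', rfl⟩ := hy
  refine ⟨t + t', u + u', v + v', l ++ l', ?_, ?_⟩
  · rw [cost1_append]
    have h1 := norm_add_le t t'
    have h2 := norm_add_le u u'
    have h3 := norm_add_le v v'
    linarith
  · rw [add_smul, add_mul, mul_add, val2_append]
    abel

theorem stwo_smul (a : A) (s : ℂ) {c : ℝ} {x : A} (hx : x ∈ STwo a c) :
    s • x ∈ STwo a (‖s‖ * c) := by
  obtain ⟨t, u, v, l, hl, rfl⟩ := hx
  refine ⟨s * t, s • u, s • v, l.map fun p => (s • p.1, p.2), ?_, ?_⟩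
  · rw [cost1_smul, norm_mul, norm_smul, norm_smul]
    calc ‖s‖ * ‖t‖ + ‖s‖ * ‖u‖ + ‖s‖ * ‖v‖ + ‖s‖ * cost1 l
        = ‖s‖ * (‖t‖ + ‖u‖ + ‖v‖ + cost1 l) := by ring
      _ ≤ ‖s‖ * c := mul_le_mul_of_nonneg_left hl (norm_nonneg s)
  · rw [smul_add, smul_add, smul_add, val2_smul, mul_smul, smul_mul_assoc,
      mul_smul_comm]

theorem stwo_absorb {a : A} (ha : a ≠ 0)
    (hsimple : ∀ I : Set A, IsIdealSet A I → I = {0} ∨ I = Set.univ)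
    (z : A) : ∃ c : ℝ, z ∈ STwo a c := by
  set J : Set A := {w | ∃ c : ℝ, w ∈ STwo a c} with hJ
  have hJideal : IsIdealSet A J := by
    refine ⟨⟨0, 0, 0, 0, [], by simp [cost1], by simp [val2]⟩, ?_, ?_, ?_⟩
    · rintro x ⟨c, hx⟩ y ⟨d, hy⟩
      exact ⟨c + d, stwo_add a hx hy⟩
    · rintro s x ⟨c, hx⟩
      exact ⟨‖s‖ * c, stwo_smul a s hx⟩
    · rintro w ⟨c, t, u, v, l, hl, rfl⟩ x
      constructor
      · -- x * w
        refine ⟨‖x‖ * ‖t‖ + ‖x‖ * ‖u‖ + (‖x‖ * ‖v‖ + ‖x‖ * cost1 l),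
          0, t • x + x * u, 0, (x, v) :: l.map fun p => (x * p.1, p.2), ?_, ?_⟩
        · have hc1 : ‖t • x + x * u‖ ≤ ‖x‖ * ‖t‖ + ‖x‖ * ‖u‖ := by
            calc ‖t • x + x * u‖ ≤ ‖t • x‖ + ‖x * u‖ := norm_add_le _ _
              _ ≤ ‖x‖ * ‖t‖ + ‖x‖ * ‖u‖ := by
                  rw [norm_smul]
                  have := norm_mul_le x u
                  nlinarith [norm_nonneg x, norm_nonneg t]
          have hc2 : cost1 ((x, v) :: l.map fun p => (x * p.1, p.2))
              ≤ ‖x‖ * ‖v‖ + ‖x‖ * cost1 l := by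
            have : cost1 ((x, v) :: l.map fun p => (x * p.1, p.2))
                = ‖x‖ * ‖v‖ + cost1 (l.map fun p => (x * p.1, p.2)) := by
              simp [cost1]
            rw [this]
            have := cost1_mul_left x l
            linarith
          simp only [norm_zero]
          linarith
        · have hv2 : val2 a ((x, v) :: l.map fun p => (x * p.1, p.2))
              = x * a * v + x * val2 a l := by
            have h1 : val2 a ((x, v) :: l.map fun p => (x * p.1, p.2))
                = x * a * v + val2 a (l.map fun p => (x * p.1, p.2)) := by
              simp [val2]
            rw [h1, val2_mul_left]
          rw [hv2]
          rw [zero_smul, add_mul, smul_mul_assoc, mul_zero]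
          rw [mul_add, mul_add, mul_add, mul_smul_comm]
          rw [← mul_assoc, ← mul_assoc]
          abel
      · -- w * x
        refine ⟨‖t‖ * ‖x‖ + (‖u‖ * ‖x‖) + (‖v‖ * ‖x‖ + cost1 l * ‖x‖),
          0, 0, t • x + v * x, (u, x) :: l.map fun p => (p.1, p.2 * x), ?_, ?_⟩
        · have hc1 : ‖t • x + v * x‖ ≤ ‖t‖ * ‖x‖ + ‖v‖ * ‖x‖ := by
            calc ‖t • x + v * x‖ ≤ ‖t • x‖ + ‖v * x‖ := norm_add_le _ _
              _ ≤ ‖t‖ * ‖x‖ + ‖v‖ * ‖x‖ := by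
                  rw [norm_smul]
                  have := norm_mul_le v x
                  linarith
          have hc2 : cost1 ((u, x) :: l.map fun p => (p.1, p.2 * x))
              ≤ ‖u‖ * ‖x‖ + cost1 l * ‖x‖ := by
            have : cost1 ((u, x) :: l.map fun p => (p.1, p.2 * x))
                = ‖u‖ * ‖x‖ + cost1 (l.map fun p => (p.1, p.2 * x)) := by
              simp [cost1]
            rw [this]
            have := cost1_mul_right x l
            linarith
          simp only [norm_zero]
          linarith
        · have hv2 : val2 a ((u, x) :: l.map fun p => (p.1, p.2 * x))
              = u * a * x + val2 a l * x := by
            have h1 : val2 a ((u, x) :: l.map fun p => (p.1, p.2 * x))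
                = u * a * x + val2 a (l.map fun p => (p.1, p.2 * x)) := by
              simp [val2]
            rw [h1, val2_mul_right]
          rw [hv2]
          rw [zero_smul, zero_mul, mul_add, add_mul, add_mul, add_mul]
          rw [mul_smul_comm, smul_mul_assoc, mul_assoc, mul_assoc]
          abel
  rcases hsimple J hJideal with h | h
  · exfalso
    have : a ∈ J := ⟨1, 1, 0, 0, [], by simp [cost1], by simp [val2]⟩
    rw [h] at this
    exact ha this
  · have : z ∈ J := by rw [h]; trivial
    exact this

theorem rho_val2 {k : ℕ} {ρ : A → ℝ} (h : ρ ∈ SK A k) (a : A) (l : List (A × A)) :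
    ρ (val2 a l) ≤ (k : ℝ) ^ 2 * ρ a * cost1 l := by
  induction l with
  | nil => simp [val2, cost1, sk_zero h]
  | cons p l ih =>
    have h1 : ρ (val2 a (p :: l)) ≤ ρ (p.1 * a * p.2) + ρ (val2 a l) := by
      have := h.1 (p.1 * a * p.2) (val2 a l)
      simpa [val2] using this
    have h2 : ρ (p.1 * a * p.2) ≤ ρ p.1 * ρ a * ρ p.2 := by
      calc ρ (p.1 * a * p.2) ≤ ρ (p.1 * a) * ρ p.2 := h.2.2.1 _ _
        _ ≤ ρ p.1 * ρ a * ρ p.2 :=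
            mul_le_mul_of_nonneg_right (h.2.2.1 p.1 a) (sk_nonneg h p.2)
    have h3 : ρ p.1 ≤ (k : ℝ) * ‖p.1‖ := h.2.2.2 p.1
    have h4 : ρ p.2 ≤ (k : ℝ) * ‖p.2‖ := h.2.2.2 p.2
    have hcost : cost1 (p :: l) = ‖p.1‖ * ‖p.2‖ + cost1 l := by simp [cost1]
    rw [hcost]
    have hra := sk_nonneg h a
    have hr1 := sk_nonneg h p.1
    have hr2 := sk_nonneg h p.2
    have hk : (0 : ℝ) ≤ (k : ℝ) := Nat.cast_nonneg k
    have h5 : ρ p.1 * ρ p.2 ≤ ((k : ℝ) * ‖p.1‖) * ((k : ℝ) * ‖p.2‖) :=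
      mul_le_mul h3 h4 hr2 (by positivity)
    have h6 : ρ p.1 * ρ a * ρ p.2 ≤ ((k : ℝ) * ‖p.1‖) * ((k : ℝ) * ‖p.2‖) * ρ a := by
      calc ρ p.1 * ρ a * ρ p.2 = (ρ p.1 * ρ p.2) * ρ a := by ring
        _ ≤ ((k : ℝ) * ‖p.1‖) * ((k : ℝ) * ‖p.2‖) * ρ a :=
            mul_le_mul_of_nonneg_right h5 hra
    calc ρ (val2 a (p :: l)) ≤ ρ (p.1 * a * p.2) + ρ (val2 a l) := h1
      _ ≤ ((k : ℝ) * ‖p.1‖) * ((k : ℝ) * ‖p.2‖) * ρ a + (k : ℝ) ^ 2 * ρ a * cost1 l :=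
          add_le_add (h2.trans h6) ih
      _ = (k : ℝ) ^ 2 * ρ a * (‖p.1‖ * ‖p.2‖ + cost1 l) := by ring

theorem rho_stwo {k : ℕ} {ρ : A → ℝ} (h : ρ ∈ SK A k) (a : A) {w : A}
    (hw : w ∈ STwo a 1) : ρ w ≤ ρ a * (1 + (k : ℝ)) ^ 2 := by
  obtain ⟨t, u, v, l, hl, rfl⟩ := hw
  have h1 : ρ (t • a + u * a + a * v + val2 a l)
      ≤ ρ (t • a) + ρ (u * a) + ρ (a * v) + ρ (val2 a l) := by
    have e1 := h.1 (t • a + u * a + a * v) (val2 a l)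
    have e2 := h.1 (t • a + u * a) (a * v)
    have e3 := h.1 (t • a) (u * a)
    linarith
  have h2 : ρ (t • a) = ‖t‖ * ρ a := h.2.1 t a
  have h3 : ρ (u * a) ≤ (k : ℝ) * ‖u‖ * ρ a := by
    calc ρ (u * a) ≤ ρ u * ρ a := h.2.2.1 u a
      _ ≤ (k : ℝ) * ‖u‖ * ρ a :=
          mul_le_mul_of_nonneg_right (h.2.2.2 u) (sk_nonneg h a)
  have h4 : ρ (a * v) ≤ ρ a * ((k : ℝ) * ‖v‖) := by
    calc ρ (a * v) ≤ ρ a * ρ v := h.2.2.1 a v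
      _ ≤ ρ a * ((k : ℝ) * ‖v‖) :=
          mul_le_mul_of_nonneg_left (h.2.2.2 v) (sk_nonneg h a)
  have h5 := rho_val2 h a l
  have hra := sk_nonneg h a
  have hk : (0 : ℝ) ≤ (k : ℝ) := Nat.cast_nonneg k
  have hcost := cost1_nonneg (A := A) l
  have p1 : (0 : ℝ) ≤ ((1 + (k : ℝ)) ^ 2 - 1) * ‖t‖ :=
    mul_nonneg (by nlinarith) (norm_nonneg t)
  have p2 : (0 : ℝ) ≤ ((1 + (k : ℝ)) ^ 2 - (k : ℝ)) * ‖u‖ :=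
    mul_nonneg (by nlinarith) (norm_nonneg u)
  have p3 : (0 : ℝ) ≤ ((1 + (k : ℝ)) ^ 2 - (k : ℝ)) * ‖v‖ :=
    mul_nonneg (by nlinarith) (norm_nonneg v)
  have p4 : (0 : ℝ) ≤ ((1 + (k : ℝ)) ^ 2 - (k : ℝ) ^ 2) * cost1 l :=
    mul_nonneg (by nlinarith) hcost
  have hco : ‖t‖ + (k : ℝ) * ‖u‖ + (k : ℝ) * ‖v‖ + (k : ℝ) ^ 2 * cost1 l
      ≤ (1 + (k : ℝ)) ^ 2 * (‖t‖ + ‖u‖ + ‖v‖ + cost1 l) := by nlinarith [p1, p2, p3, p4]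
  have hco2 : ‖t‖ + (k : ℝ) * ‖u‖ + (k : ℝ) * ‖v‖ + (k : ℝ) ^ 2 * cost1 l
      ≤ (1 + (k : ℝ)) ^ 2 := by
    have := mul_le_mul_of_nonneg_left hl (show (0:ℝ) ≤ (1 + (k : ℝ)) ^ 2 by positivity)
    calc ‖t‖ + (k : ℝ) * ‖u‖ + (k : ℝ) * ‖v‖ + (k : ℝ) ^ 2 * cost1 l
        ≤ (1 + (k : ℝ)) ^ 2 * (‖t‖ + ‖u‖ + ‖v‖ + cost1 l) := hco
      _ ≤ (1 + (k : ℝ)) ^ 2 * 1 := this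
      _ = (1 + (k : ℝ)) ^ 2 := mul_one _
  have hfin : ‖t‖ * ρ a + (k : ℝ) * ‖u‖ * ρ a + ρ a * ((k : ℝ) * ‖v‖)
      + (k : ℝ) ^ 2 * ρ a * cost1 l ≤ ρ a * (1 + (k : ℝ)) ^ 2 := by
    have heq : ‖t‖ * ρ a + (k : ℝ) * ‖u‖ * ρ a + ρ a * ((k : ℝ) * ‖v‖)
        + (k : ℝ) ^ 2 * ρ a * cost1 l
        = ρ a * (‖t‖ + (k : ℝ) * ‖u‖ + (k : ℝ) * ‖v‖ + (k : ℝ) ^ 2 * cost1 l) := by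
      ring
    rw [heq]
    exact mul_le_mul_of_nonneg_left hco2 hra
  linarith [h1, h2, h3, h4, h5, hfin]

/-! ### The key quantitative lemma -/

theorem key_lemma
    (hsimple : ∀ I : Set A, IsIdealSet A I → I = {0} ∨ I = Set.univ)
    (hdim : 1 < Module.rank ℂ A) (k : ℕ) :
    ∃ (a : A) (ε : ℝ), a ≠ 0 ∧ 0 < ε ∧
      ∀ ρ ∈ SK A k, ρ a < ε → ∀ z : A, ρ z = 0 := by
  obtain ⟨a, ha⟩ := exists_ne_zero hdim
  obtain ⟨ε₁, hε₁, hball₁⟩ :=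
    ball_subset_closure (SOne : ℝ → Set A) (fun {c d} h => sone_mono h)
      (fun {c d x y} hx hy => sone_add hx hy) (fun t {c x} hx => sone_smul t hx)
      (sone_absorb hsimple hdim)
  obtain ⟨ε₂, hε₂, hball₂⟩ :=
    ball_subset_closure (STwo a) (fun {c d} h => stwo_mono a h)
      (fun {c d x y} hx hy => stwo_add a hx hy) (fun t {c x} hx => stwo_smul a t hx)
      (stwo_absorb ha hsimple)
  refine ⟨a, ε₁ * ε₂ / (4 * (1 + (k : ℝ)) ^ 2), ha, by positivity, ?_⟩
  intro ρ hρ hsmall z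
  set m : ℝ := skNorm ρ with hm
  have hm0 : 0 ≤ m := skNorm_nonneg hρ
  have hra := sk_nonneg hρ a
  have hk : (0 : ℝ) ≤ (k : ℝ) := Nat.cast_nonneg k
  -- Step 1: m ≤ 2 * (ρ a * (1+k)^2) / ε₂
  have hB2 : (0 : ℝ) ≤ ρ a * (1 + (k : ℝ)) ^ 2 := by positivity
  have step1 : m ≤ 2 * (ρ a * (1 + (k : ℝ)) ^ 2) / ε₂ := by
    apply skNorm_le hρ (by positivity)
    intro z'
    exact rho_le_of_ball hρ hε₂ hB2 hball₂ (fun x hx => rho_stwo hρ a hx) z'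
  -- Step 2: m ≤ 2 * m^2 / ε₁
  have step2 : m ≤ 2 * m ^ 2 / ε₁ := by
    apply skNorm_le hρ (by positivity)
    intro z'
    apply rho_le_of_ball hρ hε₁ (by positivity) hball₁ ?_ z'
    rintro x ⟨l, hl, rfl⟩
    calc ρ (val1 l) ≤ m ^ 2 * cost1 l := rho_val1 hρ l
      _ ≤ m ^ 2 * 1 := mul_le_mul_of_nonneg_left hl (by positivity)
      _ = m ^ 2 := mul_one _
  -- conclude m = 0
  have hmz : m ≤ 0 := by
    by_contra hpos
    push_neg at hpos
    have hK : (0 : ℝ) < (1 + (k : ℝ)) ^ 2 := by positivity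
    have hsmall' : ρ a * (4 * (1 + (k : ℝ)) ^ 2) < ε₁ * ε₂ := by
      rw [lt_div_iff₀ (by positivity)] at hsmall
      linarith
    have hge : ε₁ ≤ 2 * m := by
      have h' : m * ε₁ ≤ 2 * m ^ 2 := (le_div_iff₀ hε₁).mp step2
      nlinarith
    have hlt : m * ε₂ ≤ 2 * (ρ a * (1 + (k : ℝ)) ^ 2) := (le_div_iff₀ hε₂).mp step1
    nlinarith [mul_le_mul_of_nonneg_right hge hε₂.le]
  exact sk_eq_zero_of_skNorm_eq_zero hρ hmz z

end TauInftyAux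

end TauInftyAuxiliary

/-- Theorem 1.13 of the paper: if `A` is an algebraically simple Banach algebra of
dimension greater than one, then the topology `τ_∞` is Hausdorff on `Id(A)`. -/
theorem tauInfty_t2_of_algebraically_simple
    (hsimple : ∀ I : Set A, IsIdealSet A I → I = {0} ∨ I = Set.univ)
    (hdim : 1 < Module.rank ℂ A) :
    @T2Space (ClosedIdeals A) (tauInfty A) := by
  classical
  obtain ⟨a0, ha0⟩ := TauInftyAux.exists_ne_zero (A := A) hdim
  letI : TopologicalSpace (ClosedIdeals A) := tauInfty A
  set U : Set (ClosedIdeals A) := {I | I.1 = {0}} with hU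
  set V : Set (ClosedIdeals A) := {I | I.1 = Set.univ} with hV
  have hUopen : IsOpen U := by
    refine isOpen_iSup_iff.mpr fun k => isOpen_coinduced.mpr ?_
    have hpre : kerSK A k ⁻¹' U = {ρ : SK A k | ∃ x : A, ρ.1 x ≠ 0} := by
      ext ρ
      simp only [Set.mem_preimage, Set.mem_setOf_eq, hU, kerSK]
      constructor
      · intro h
        refine ⟨a0, fun hz => ?_⟩
        have : a0 ∈ ({a | ρ.1 a = 0} : Set A) := hz
        rw [h] at this
        exact ha0 this
      · rintro ⟨x, hx⟩
        rcases hsimple {a | ρ.1 a = 0} (sk_ker_isClosedIdeal A ρ.2).2 with h | h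
        · exact h
        · exfalso
          apply hx
          have : x ∈ ({a | ρ.1 a = 0} : Set A) := by rw [h]; trivial
          exact this
    rw [hpre]
    have : {ρ : SK A k | ∃ x : A, ρ.1 x ≠ 0}
        = ⋃ x : A, {ρ : SK A k | ρ.1 x ≠ 0} := by
      ext ρ; simp
    rw [this]
    apply isOpen_iUnion
    intro x
    have : {ρ : SK A k | ρ.1 x ≠ 0}
        = (fun ρ : SK A k => ρ.1 x) ⁻¹' ({0}ᶜ) := rfl
    rw [this]
    exact IsOpen.preimage ((continuous_apply x).comp continuous_subtype_val)
      isOpen_compl_singleton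
  have hVopen : IsOpen V := by
    refine isOpen_iSup_iff.mpr fun k => isOpen_coinduced.mpr ?_
    obtain ⟨a, ε, ha, hε, hkey⟩ := TauInftyAux.key_lemma (A := A) hsimple hdim k
    have hpre : kerSK A k ⁻¹' V = {ρ : SK A k | ρ.1 a < ε} := by
      ext ρ
      simp only [Set.mem_preimage, Set.mem_setOf_eq, hV, kerSK]
      constructor
      · intro h
        have : a ∈ ({x | ρ.1 x = 0} : Set A) := by rw [h]; trivial
        rw [Set.mem_setOf_eq] at this
        rw [this]
        exact hε
      · intro h
        have hz := hkey ρ.1 ρ.2 h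
        apply Set.eq_univ_iff_forall.mpr
        intro x
        exact hz x
    rw [hpre]
    have : {ρ : SK A k | ρ.1 a < ε}
        = (fun ρ : SK A k => ρ.1 a) ⁻¹' (Set.Iio ε) := rfl
    rw [this]
    exact IsOpen.preimage ((continuous_apply a).comp continuous_subtype_val)
      isOpen_Iio
  have hdisj : Disjoint U V := by
    rw [Set.disjoint_left]
    intro I hIU hIV
    rw [hU, Set.mem_setOf_eq] at hIU
    rw [hV, Set.mem_setOf_eq] at hIV
    have : ({0} : Set A) = Set.univ := by rw [← hIU, hIV]
    have ha' : a0 ∈ ({0} : Set A) := by rw [this]; trivial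
    exact ha0 ha'
  refine ⟨fun {x y} hxy => ?_⟩
  rcases hsimple x.1 x.2.2 with hx | hx <;> rcases hsimple y.1 y.2.2 with hy | hy
  · exact absurd (Subtype.ext (hx.trans hy.symm)) hxy
  · exact ⟨U, V, hUopen, hVopen, hx, hy, hdisj⟩
  · exact ⟨V, U, hVopen, hUopen, hx, hy, hdisj.symm⟩
  · exact absurd (Subtype.ext (hx.trans hy.symm)) hxy

end BanachAlgebraPrelude
end

section
/- Let A be a Banach algebra over ℂ and let M′ = {ker φ : φ a character of A} ⊆ Id(A) (the set of maximal modular two-sided ideals of codimension one). Then the map φ ↦ ker φ is a bijection from the character space of A onto M′, and the restriction of the topology τ_∞ to M′ coincides with the Gelfand topology transported by this bijection. (This is the τ_∞ part of Theorem 1.6 of the paper, which asserts the same for the topologies τ_n and τ_r as well.) -/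
set_option linter.unusedSectionVars false

open Filter Topology

section BanachAlgebraPrelude

variable (A : Type*) [NonUnitalNormedRing A] [NormedSpace ℂ A]
  [IsScalarTower ℂ A A] [SMulCommClass ℂ A A] [CompleteSpace A]

/-! ### Auxiliary lemmas -/

private def pw (y : A) : ℕ → A
  | 0 => y
  | n+1 => pw y n * y

lemma char_sub {φ : A → ℂ} (h : IsCharacter A φ) (x y : A) : φ (x - y) = φ x - φ y := by
  have h1 : φ ((-1:ℂ) • y) = (-1:ℂ) * φ y := h.2.2.2.1 _ _
  rw [neg_one_smul] at h1
  rw [sub_eq_add_neg, h.2.2.1, h1]; ring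

lemma char_norm_le {φ : A → ℂ} (h : IsCharacter A φ) (y : A) : ‖φ y‖ ≤ ‖y‖ := by
  obtain ⟨hne, hc, hadd, hsmul, hmul⟩ := h
  let L : A →L[ℂ] ℂ := ⟨{ toFun := φ, map_add' := hadd, map_smul' := hsmul }, hc⟩
  set C := max ‖L‖ 1 with hC
  have hC1 : (1:ℝ) ≤ C := le_max_right _ _
  have hC0 : (0:ℝ) ≤ C := by linarith
  have hbound : ∀ x : A, ‖φ x‖ ≤ C * ‖x‖ := by
    intro x
    refine (L.le_opNorm x).trans ?_
    have : ‖L‖ ≤ C := le_max_left _ _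
    have h0 : (0:ℝ) ≤ ‖x‖ := norm_nonneg _
    nlinarith
  have hpw_phi : ∀ n, φ (pw A y n) = (φ y) ^ (n+1) := by
    intro n; induction n with
    | zero => simp [pw]
    | succ n ih => rw [pw, hmul, ih]; ring
  have hpw_norm : ∀ n, ‖pw A y n‖ ≤ ‖y‖ ^ (n+1) := by
    intro n; induction n with
    | zero => simp [pw]
    | succ n ih =>
      calc ‖pw A y (n+1)‖ ≤ ‖pw A y n‖ * ‖y‖ := norm_mul_le _ _
        _ ≤ ‖y‖^(n+1) * ‖y‖ := by
            have := norm_nonneg y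
            nlinarith [norm_nonneg (pw A y n)]
        _ = ‖y‖^(n+1+1) := by ring
  have key : ∀ n : ℕ, ‖φ y‖ ^ (n+1) ≤ C * ‖y‖ ^ (n+1) := by
    intro n
    calc ‖φ y‖^(n+1) = ‖(φ y)^(n+1)‖ := (norm_pow _ _).symm
      _ = ‖φ (pw A y n)‖ := by rw [hpw_phi]
      _ ≤ C * ‖pw A y n‖ := hbound _
      _ ≤ C * ‖y‖^(n+1) := by
          have := hpw_norm n
          nlinarith [norm_nonneg (pw A y n)]
  by_contra hcon
  push_neg at hcon
  rcases eq_or_lt_of_le (norm_nonneg y) with hy0 | hy0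
  · have h1 := key 0
    rw [← hy0] at h1
    have h2 : (0:ℝ)^(0+1) = 0 := by norm_num
    rw [h2, mul_zero] at h1
    have h3 : ‖φ y‖ ≤ 0 := by
      have : ‖φ y‖ ^ (0+1) = ‖φ y‖ := by ring
      linarith [this ▸ h1]
    linarith [hcon, hy0]
  · set t := ‖φ y‖ / ‖y‖ with ht
    have ht1 : 1 < t := (one_lt_div hy0).mpr hcon
    obtain ⟨n, hn⟩ := pow_unbounded_of_one_lt C ht1
    have hkey := key n
    have htn : t ^ (n+1) ≤ C := by
      rw [ht, div_pow, div_le_iff₀ (by positivity)]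
      linarith [hkey]
    have : t ^ n ≤ t ^ (n+1) := by
      apply pow_le_pow_right₀ (le_of_lt ht1)
      omega
    linarith

lemma char_exists_one {φ : A → ℂ} (h : IsCharacter A φ) : ∃ u : A, φ u = 1 := by
  obtain ⟨x, hx⟩ := Function.ne_iff.mp h.1
  simp only [Pi.zero_apply] at hx
  exact ⟨(φ x)⁻¹ • x, by rw [h.2.2.2.1, inv_mul_cancel₀ hx]⟩

lemma char_eq_of_ker_eq {φ ψ : A → ℂ} (hφ : IsCharacter A φ) (hψ : IsCharacter A ψ)
    (h : charKer A φ = charKer A ψ) : φ = ψ := by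
  obtain ⟨u, hu⟩ := char_exists_one A hφ
  have hψu0 : ψ u ≠ 0 := by
    intro h0
    have h1 : u ∈ charKer A ψ := h0
    rw [← h] at h1
    have h2 : φ u = 0 := h1
    rw [hu] at h2; exact one_ne_zero h2
  have hsq : φ (u*u - u) = 0 := by
    rw [char_sub A hφ, hφ.2.2.2.2, hu]; ring
  have hsq' : u*u - u ∈ charKer A φ := hsq
  rw [h] at hsq'
  have hψsq : ψ (u*u - u) = 0 := hsq'
  rw [char_sub A hψ, hψ.2.2.2.2] at hψsq
  have hψu : ψ u = 1 := by
    have h2 : ψ u * (ψ u - 1) = 0 := by linear_combination hψsq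
    rcases mul_eq_zero.mp h2 with h1 | h1
    · exact absurd h1 hψu0
    · exact sub_eq_zero.mp h1
  funext a
  have hker : φ (a - φ a • u) = 0 := by
    rw [char_sub A hφ, hφ.2.2.2.1, hu]; ring
  have hker1 : a - φ a • u ∈ charKer A φ := hker
  rw [h] at hker1
  have hker' : ψ (a - φ a • u) = 0 := hker1
  rw [char_sub A hψ, hψ.2.2.2.1, hψu] at hker'
  linear_combination -hker'
lemma sk_nonneg {k : ℕ} {ρ : A → ℝ} (h : ρ ∈ SK A k) (a : A) : 0 ≤ ρ a := by
  obtain ⟨h1, h2, h3, h4⟩ := h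
  have hz : ρ 0 = 0 := by have := h2 0 0; simpa using this
  have hneg : ρ (-a) = ρ a := by
    have := h2 (-1) a; simpa using this
  have h' := h1 a (-a)
  rw [show a + -a = (0 : A) by abel, hz, hneg] at h'
  linarith

lemma sk_congr {k : ℕ} {ρ : A → ℝ} (h : ρ ∈ SK A k) {x y : A} (hxy : ρ (x - y) = 0) :
    ρ x = ρ y := by
  obtain ⟨h1, h2, h3, h4⟩ := h
  have hneg : ∀ z : A, ρ (-z) = ρ z := by
    intro z; have := h2 (-1) z; simpa using this
  have hx : ρ x ≤ ρ y + ρ (x - y) := by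
    have := h1 y (x - y); rw [show y + (x - y) = x by abel] at this; linarith
  have hy : ρ y ≤ ρ x + ρ (x - y) := by
    have := h1 x (y - x)
    rw [show x + (y - x) = y by abel] at this
    rw [show y - x = -(x - y) by abel, hneg] at this
    linarith
  rw [hxy] at hx hy
  linarith

lemma codim_rep {k : ℕ} {ρ : A → ℝ} (hρ : ρ ∈ SK A k) {ψ : A → ℂ} (hψ : IsCharacter A ψ)
    (hker : {a : A | ρ a = 0} = charKer A ψ) :
    ∃ c : ℝ, 1 ≤ c ∧ ρ = fun y => c * ‖ψ y‖ := by
  obtain ⟨u, hu⟩ := char_exists_one A hψ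
  have hrep : ∀ y : A, ρ y = ρ u * ‖ψ y‖ := by
    intro y
    have hz : ψ (y - ψ y • u) = 0 := by
      rw [char_sub A hψ, hψ.2.2.2.1, hu]; ring
    have hz' : (y - ψ y • u) ∈ charKer A ψ := hz
    rw [← hker] at hz'
    have h1 : ρ y = ρ (ψ y • u) := sk_congr A hρ hz'
    rw [h1, hρ.2.1]
    ring
  have hc0 : ρ u ≠ 0 := by
    intro h0
    have : u ∈ charKer A ψ := hker ▸ (h0 : u ∈ {a : A | ρ a = 0})
    have : ψ u = 0 := this
    rw [hu] at this; exact one_ne_zero this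
  have hcpos : 0 < ρ u := lt_of_le_of_ne (sk_nonneg A hρ u) (Ne.symm hc0)
  have hsq : ρ (u * u) ≤ ρ u * ρ u := hρ.2.2.1 u u
  have hequ : ρ (u * u) = ρ u := by
    rw [hrep (u*u), hψ.2.2.2.2, hu]; simp
  have hc1 : 1 ≤ ρ u := by
    rw [hequ] at hsq; nlinarith
  exact ⟨ρ u, hc1, funext hrep⟩

lemma isClosed_SK (k : ℕ) : IsClosed (SK A k) := by
  have heq : SK A k = ({ρ : A → ℝ | ∀ a b, ρ (a + b) ≤ ρ a + ρ b} ∩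
      ({ρ | ∀ (c : ℂ) (a : A), ρ (c • a) = ‖c‖ * ρ a} ∩
        ({ρ | ∀ a b, ρ (a * b) ≤ ρ a * ρ b} ∩ {ρ | ∀ a, ρ a ≤ k * ‖a‖}))) := by
    ext ρ; simp only [SK, Set.mem_setOf_eq, Set.mem_inter_iff]
  rw [heq]
  refine IsClosed.inter ?_ (IsClosed.inter ?_ (IsClosed.inter ?_ ?_))
  · rw [Set.setOf_forall]
    refine isClosed_iInter fun a => ?_
    rw [Set.setOf_forall]
    exact isClosed_iInter fun b =>
      isClosed_le (continuous_apply (a + b)) ((continuous_apply a).add (continuous_apply b))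
  · rw [Set.setOf_forall]
    refine isClosed_iInter fun c => ?_
    rw [Set.setOf_forall]
    exact isClosed_iInter fun a =>
      isClosed_eq (continuous_apply (c • a)) (continuous_const.mul (continuous_apply a))
  · rw [Set.setOf_forall]
    refine isClosed_iInter fun a => ?_
    rw [Set.setOf_forall]
    exact isClosed_iInter fun b =>
      isClosed_le (continuous_apply (a * b)) ((continuous_apply a).mul (continuous_apply b))
  · rw [Set.setOf_forall]
    exact isClosed_iInter fun a => isClosed_le (continuous_apply a) continuous_const
lemma closure_E_subset (k : ℕ) (φ₀ : A → ℂ) (I : Set A) (hI : I.Finite) (εf : A → ℝ)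
    (E : Set (A → ℝ))
    (hE : E = {f | f ∈ SK A k ∧ ∃ c : ℝ, 1 ≤ c ∧ ∃ ψ : A → ℂ, IsCharacter A ψ ∧
      (∃ a ∈ I, εf a ≤ ‖ψ a - φ₀ a‖) ∧ f = fun y => c * ‖ψ y‖}) :
    closure E ⊆ {f : A → ℝ | ∀ x y : A, f (x * y) = 0} ∪ E := by
  intro f₀ hf₀
  obtain ⟨u, hEu, hle⟩ := mem_closure_iff_ultrafilter.mp hf₀
  have hch : ∀ f : A → ℝ, ∃ cp : ℝ × (A → ℂ), f ∈ E →
      1 ≤ cp.1 ∧ IsCharacter A cp.2 ∧ (∃ a ∈ I, εf a ≤ ‖cp.2 a - φ₀ a‖) ∧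
        f = fun y => cp.1 * ‖cp.2 y‖ := by
    intro f
    by_cases h : f ∈ E
    · rw [hE] at h
      obtain ⟨-, c, hc, ψ, hψ, hfar, hfe⟩ := h
      exact ⟨(c, ψ), fun _ => ⟨hc, hψ, hfar, hfe⟩⟩
    · exact ⟨(1, 0), fun h' => absurd h' h⟩
  choose cp hcp using hch
  have hmem : ∀ S : Set (A → ℝ), IsClosed S → S ∈ u → f₀ ∈ S := fun S hS hSu =>
    hS.closure_subset (mem_closure_iff_ultrafilter.mpr ⟨u, hSu, hle⟩)
  have hev : ∀ y : A, Tendsto (fun f : A → ℝ => f y) ↑u (𝓝 (f₀ y)) := fun y =>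
    ((continuous_apply y).tendsto f₀).mono_left hle
  have hf₀nn : ∀ y : A, 0 ≤ f₀ y := by
    intro y
    refine hmem {f | 0 ≤ f y} (isClosed_le continuous_const (continuous_apply y)) ?_
    refine mem_of_superset hEu fun f hf => ?_
    have h1 := (hcp f hf).2.2.2
    have h2 := (hcp f hf).1
    show 0 ≤ f y
    rw [congrFun h1 y]
    exact mul_nonneg (by linarith) (norm_nonneg _)
  by_cases hbig : ∀ N : ℕ, ({f | (N:ℝ) + 1 ≤ (cp f).1} ∩ E) ∈ u
  · left
    intro x y
    have hub : ∀ N : ℕ, f₀ (x*y) ≤ (k:ℝ)^2 * ‖x‖ * ‖y‖ / ((N:ℝ)+1) := by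
      intro N
      refine hmem {f | f (x*y) ≤ (k:ℝ)^2 * ‖x‖ * ‖y‖ / ((N:ℝ)+1)}
        (isClosed_le (continuous_apply (x*y)) continuous_const) ?_
      refine mem_of_superset (hbig N) ?_
      rintro f ⟨hfc, hfE⟩
      obtain ⟨hc1, hψch, -, hfe⟩ := hcp f hfE
      have hfSK : f ∈ SK A k := by rw [hE] at hfE; exact hfE.1
      have hN1 : (0:ℝ) < (N:ℝ) + 1 := by positivity
      have hcN : ((N:ℝ)+1) ≤ (cp f).1 := hfc
      have hcpos : (0:ℝ) < (cp f).1 := by linarith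
      have hfx : f x ≤ k * ‖x‖ := hfSK.2.2.2 x
      have hfy : f y ≤ k * ‖y‖ := hfSK.2.2.2 y
      have hfxnn : 0 ≤ f x := sk_nonneg A hfSK x
      have hfynn : 0 ≤ f y := sk_nonneg A hfSK y
      have hfxy_nn : 0 ≤ f (x*y) := sk_nonneg A hfSK (x*y)
      have hmulc : f (x*y) * (cp f).1 = f x * f y := by
        rw [congrFun hfe (x*y), congrFun hfe x, congrFun hfe y, hψch.2.2.2.2, norm_mul]
        ring
      show f (x*y) ≤ _
      rw [le_div_iff₀ hN1]
      calc f (x*y) * ((N:ℝ)+1) ≤ f (x*y) * (cp f).1 := by nlinarith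
        _ = f x * f y := hmulc
        _ ≤ (k*‖x‖) * (k*‖y‖) := by nlinarith [norm_nonneg x, norm_nonneg y]
        _ = (k:ℝ)^2*‖x‖*‖y‖ := by ring
    have h0 : f₀ (x*y) ≤ 0 := by
      by_contra hpos
      push_neg at hpos
      obtain ⟨N, hN⟩ := exists_nat_gt ((k:ℝ)^2*‖x‖*‖y‖ / f₀ (x*y))
      have h1 := hub N
      rw [div_lt_iff₀ hpos] at hN
      rw [le_div_iff₀ (by positivity : (0:ℝ) < (N:ℝ)+1)] at h1
      nlinarith
    exact le_antisymm h0 (hf₀nn _)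
  · push_neg at hbig
    obtain ⟨N, hN⟩ := hbig
    have hGc : ({f | (N:ℝ)+1 ≤ (cp f).1} ∩ E)ᶜ ∈ u := Ultrafilter.compl_mem_iff_notMem.mpr hN
    have hG : (E ∩ {f | (cp f).1 ≤ (N:ℝ)+1}) ∈ u := by
      refine mem_of_superset (Filter.inter_mem hEu hGc) ?_
      rintro f ⟨hfE, hfc⟩
      refine ⟨hfE, ?_⟩
      by_contra hlt
      have hlt' : ¬((cp f).1 ≤ (N:ℝ)+1) := hlt
      exact hfc ⟨show (N:ℝ)+1 ≤ (cp f).1 from (not_le.mp hlt').le, hfE⟩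
    obtain ⟨c₀, hc₀mem, hc₀t⟩ :
        ∃ c₀ ∈ Set.Icc (1:ℝ) ((N:ℝ)+1), Tendsto (fun f => (cp f).1) ↑u (𝓝 c₀) := by
      have hmemIcc : {f | (cp f).1 ∈ Set.Icc (1:ℝ) ((N:ℝ)+1)} ∈ u :=
        mem_of_superset hG (by rintro f ⟨hfE, hfc⟩; exact ⟨(hcp f hfE).1, hfc⟩)
      obtain ⟨c₀, hmemc, hlec⟩ := isCompact_Icc.ultrafilter_le_nhds
        (Ultrafilter.map (fun f => (cp f).1) u)
        (le_principal_iff.mpr (Ultrafilter.mem_map.mpr hmemIcc))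
      rw [Ultrafilter.coe_map] at hlec
      exact ⟨c₀, hmemc, hlec⟩
    have hψlim : ∀ y : A, ∃ z : ℂ, ‖z‖ ≤ ‖y‖ ∧ Tendsto (fun f => (cp f).2 y) ↑u (𝓝 z) := by
      intro y
      have hmemB : {f | (cp f).2 y ∈ Metric.closedBall (0:ℂ) ‖y‖} ∈ u := by
        refine mem_of_superset hEu fun f hf => ?_
        have := char_norm_le A (hcp f hf).2.1 y
        simpa [Metric.mem_closedBall, dist_zero_right] using this
      obtain ⟨z, hzmem, hz⟩ := (isCompact_closedBall (0:ℂ) ‖y‖).ultrafilter_le_nhds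
        (Ultrafilter.map (fun f => (cp f).2 y) u)
        (le_principal_iff.mpr (Ultrafilter.mem_map.mpr hmemB))
      rw [Ultrafilter.coe_map] at hz
      exact ⟨z, by simpa [Metric.mem_closedBall, dist_zero_right] using hzmem, hz⟩
    choose ψ₀ hψ₀norm hψ₀tend using hψlim
    have hfeq : ∀ y, f₀ y = c₀ * ‖ψ₀ y‖ := by
      intro y
      have h1 : Tendsto (fun f => (cp f).1 * ‖(cp f).2 y‖) ↑u (𝓝 (c₀ * ‖ψ₀ y‖)) :=
        hc₀t.mul (hψ₀tend y).norm
      have h2 : (fun f => (cp f).1 * ‖(cp f).2 y‖) =ᶠ[↑u] (fun f : A → ℝ => f y) :=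
        eventuallyEq_of_mem hEu (fun f hf => (congrFun (hcp f hf).2.2.2 y).symm)
      exact tendsto_nhds_unique (hev y) (Tendsto.congr' h2 h1)
    by_cases hz : ∀ y : A, ψ₀ y = 0
    · left
      intro x y
      rw [hfeq, hz, norm_zero, mul_zero]
    · right
      rw [hE]
      have hSK₀ : f₀ ∈ SK A k :=
        hmem (SK A k) (isClosed_SK A k)
          (mem_of_superset hEu fun f hf => by rw [hE] at hf; exact hf.1)
      have haddl : ∀ x y : A, ψ₀ (x + y) = ψ₀ x + ψ₀ y := by
        intro x y
        have h1 : (fun f => (cp f).2 x + (cp f).2 y) =ᶠ[↑u] (fun f => (cp f).2 (x+y)) :=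
          eventuallyEq_of_mem hEu (fun f hf => ((hcp f hf).2.1.2.2.1 x y).symm)
        exact tendsto_nhds_unique (hψ₀tend (x+y))
          (Tendsto.congr' h1 ((hψ₀tend x).add (hψ₀tend y)))
      have hsmull : ∀ (c : ℂ) (x : A), ψ₀ (c • x) = c * ψ₀ x := by
        intro c x
        have h1 : (fun f => c * (cp f).2 x) =ᶠ[↑u] (fun f => (cp f).2 (c • x)) :=
          eventuallyEq_of_mem hEu (fun f hf => ((hcp f hf).2.1.2.2.2.1 c x).symm)
        exact tendsto_nhds_unique (hψ₀tend (c • x))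
          (Tendsto.congr' h1 ((hψ₀tend x).const_mul c))
      have hmull : ∀ x y : A, ψ₀ (x * y) = ψ₀ x * ψ₀ y := by
        intro x y
        have h1 : (fun f => (cp f).2 x * (cp f).2 y) =ᶠ[↑u] (fun f => (cp f).2 (x*y)) :=
          eventuallyEq_of_mem hEu (fun f hf => ((hcp f hf).2.1.2.2.2.2 x y).symm)
        exact tendsto_nhds_unique (hψ₀tend (x*y))
          (Tendsto.congr' h1 ((hψ₀tend x).mul (hψ₀tend y)))
      have hne : ψ₀ ≠ 0 := by
        push_neg at hz
        obtain ⟨y, hy⟩ := hz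
        exact Function.ne_iff.mpr ⟨y, by simpa using hy⟩
      have hsubl : ∀ x y : A, ψ₀ (x - y) = ψ₀ x - ψ₀ y := by
        intro x y
        have h1 : ψ₀ ((-1:ℂ) • y) = (-1:ℂ) * ψ₀ y := hsmull _ _
        rw [neg_one_smul] at h1
        rw [sub_eq_add_neg, haddl, h1]; ring
      have hcont : Continuous ψ₀ := by
        have hlip : LipschitzWith 1 ψ₀ := by
          apply LipschitzWith.of_dist_le_mul
          intro x y
          rw [dist_eq_norm, ← hsubl x y, NNReal.coe_one, one_mul]
          calc ‖ψ₀ (x - y)‖ ≤ ‖x - y‖ := hψ₀norm (x - y)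
            _ = dist x y := (dist_eq_norm x y).symm
        exact hlip.continuous
      have hfar : ∃ a ∈ I, εf a ≤ ‖ψ₀ a - φ₀ a‖ := by
        have hsubU : E ⊆ ⋃ a ∈ I, {f | εf a ≤ ‖(cp f).2 a - φ₀ a‖} := by
          intro f hf
          obtain ⟨a, haI, hfa⟩ := (hcp f hf).2.2.1
          exact Set.mem_biUnion haI hfa
        have hU : (⋃ a ∈ I, {f : A → ℝ | εf a ≤ ‖(cp f).2 a - φ₀ a‖}) ∈ u :=
          mem_of_superset hEu hsubU
        obtain ⟨a, haI, ha⟩ := (Ultrafilter.finite_biUnion_mem_iff hI).mp hU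
        refine ⟨a, haI, ?_⟩
        have hcl : IsClosed {z : ℂ | εf a ≤ ‖z - φ₀ a‖} :=
          isClosed_le continuous_const (continuous_id.sub continuous_const).norm
        exact hcl.mem_of_tendsto (hψ₀tend a) ha
      exact ⟨hSK₀, c₀, hc₀mem.1, ψ₀, ⟨hne, hcont, haddl, hsmull, hmull⟩, hfar, funext hfeq⟩
/-- The basic `τ_∞`-open sets used to compare with the Gelfand topology. -/
def Uset (φ₀ : A → ℂ) (I : Set A) (εf : A → ℝ) : Set (ClosedIdeals A) :=
  {J | (∃ x y : A, x * y ∉ J.1) ∧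
    ∀ ψ : A → ℂ, IsCharacter A ψ → charKer A ψ = J.1 → ∀ a ∈ I, ‖ψ a - φ₀ a‖ < εf a}

lemma isOpen_Uset (φ₀ : A → ℂ) (I : Set A) (hI : I.Finite) (εf : A → ℝ) :
    IsOpen[tauInfty A] (Uset A φ₀ I εf) := by
  rw [tauInfty, isOpen_iSup_iff]
  intro k
  rw [tauK, isOpen_coinduced]
  set D : Set (A → ℝ) := {f | ∀ x y : A, f (x * y) = 0} with hD
  set E : Set (A → ℝ) := {f | f ∈ SK A k ∧ ∃ c : ℝ, 1 ≤ c ∧ ∃ ψ : A → ℂ, IsCharacter A ψ ∧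
      (∃ a ∈ I, εf a ≤ ‖ψ a - φ₀ a‖) ∧ f = fun y => c * ‖ψ y‖} with hEdef
  have hDclosed : IsClosed D := by
    rw [hD, Set.setOf_forall]
    refine isClosed_iInter fun x => ?_
    rw [Set.setOf_forall]
    exact isClosed_iInter fun y => isClosed_eq (continuous_apply (x * y)) continuous_const
  have hDEclosed : IsClosed (D ∪ E) := by
    apply isClosed_of_closure_subset
    rw [closure_union]
    refine Set.union_subset ?_ ?_
    · rw [hDclosed.closure_eq]; exact Set.subset_union_left
    · intro f hf
      rcases closure_E_subset A k φ₀ I hI εf E hEdef hf with h | h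
      · exact Or.inl h
      · exact Or.inr h
  have hpre : kerSK A k ⁻¹' Uset A φ₀ I εf = Subtype.val ⁻¹' (D ∪ E)ᶜ := by
    ext ρ
    simp only [Set.mem_preimage, Set.mem_compl_iff]
    constructor
    · rintro ⟨⟨x, y, hxy⟩, hall⟩
      rintro (hD' | hE')
      · exact hxy (hD' x y)
      · obtain ⟨hSK, c, hc, ψ, hψ, ⟨a, haI, hfa⟩, hfe⟩ := hE'
        have hcpos : (0:ℝ) < c := by linarith
        have hker : charKer A ψ = (kerSK A k ρ).1 := by
          ext b
          show ψ b = 0 ↔ (ρ : A → ℝ) b = 0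
          rw [congrFun hfe b]
          constructor
          · intro h; rw [h, norm_zero, mul_zero]
          · intro h
            rcases mul_eq_zero.mp h with h1 | h1
            · exact absurd h1 (ne_of_gt hcpos)
            · exact norm_eq_zero.mp h1
        exact absurd (hall ψ hψ hker a haI) (not_lt.mpr hfa)
    · intro h
      constructor
      · by_contra hno
        push_neg at hno
        refine h (Or.inl ?_)
        intro x y
        have := hno x y
        exact this
      · intro ψ hψ hker a haI
        by_contra hge
        push_neg at hge
        have hker' : {b : A | (ρ : A → ℝ) b = 0} = charKer A ψ := by
          rw [hker]; rfl
        obtain ⟨c, hc1, hrep⟩ := codim_rep A ρ.2 hψ hker'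
        exact h (Or.inr ⟨ρ.2, c, hc1, ψ, hψ, ⟨a, haI, hge⟩, hrep⟩)
  rw [hpre]
  exact (isOpen_compl_iff.mpr hDEclosed).preimage continuous_subtype_val

lemma mem_Uset {φ : A → ℂ} (hφ : IsCharacter A φ) (I : Set A) (εf : A → ℝ)
    (hε : ∀ a ∈ I, 0 < εf a) (J : ClosedIdeals A) (hJ : charKer A φ = J.1) :
    J ∈ Uset A φ I εf := by
  obtain ⟨u, hu⟩ := char_exists_one A hφ
  constructor
  · refine ⟨u, u, ?_⟩
    rw [← hJ]
    show ¬ (φ (u * u) = 0)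
    rw [hφ.2.2.2.2, hu]
    simp
  · intro ψ hψ hker a haI
    have hkk : charKer A ψ = charKer A φ := by rw [hker, hJ]
    have := char_eq_of_ker_eq A hψ hφ hkk
    rw [this]
    simpa using hε a haI
/-- The map sending a character to the element `a ↦ ‖φ a‖` of `S_1(A)`. -/
noncomputable def charSeminorm (φc : Characters A) : ↥(SK A 1) :=
  ⟨fun a => ‖φc.1 a‖, by
    refine ⟨?_, ?_, ?_, ?_⟩
    · intro a b
      show ‖φc.1 (a + b)‖ ≤ ‖φc.1 a‖ + ‖φc.1 b‖
      rw [φc.2.2.2.1 a b]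
      exact norm_add_le _ _
    · intro c a
      show ‖φc.1 (c • a)‖ = ‖c‖ * ‖φc.1 a‖
      rw [φc.2.2.2.2.1 c a, norm_mul]
    · intro a b
      show ‖φc.1 (a * b)‖ ≤ ‖φc.1 a‖ * ‖φc.1 b‖
      rw [φc.2.2.2.2.2 a b, norm_mul]
    · intro a
      show ‖φc.1 a‖ ≤ (1:ℕ) * ‖a‖
      have := char_norm_le A φc.2 a
      simpa using this⟩

lemma charSeminorm_cont : Continuous (charSeminorm A) := by
  refine Continuous.subtype_mk ?_ _
  exact continuous_pi fun a => ((continuous_apply a).comp continuous_subtype_val).norm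

lemma kerSK_charSeminorm (φc : Characters A) :
    kerSK A 1 (charSeminorm A φc) = charKerIdeal A φc := by
  apply Subtype.ext
  show {a : A | ‖φc.1 a‖ = 0} = charKer A φc.1
  ext a
  simp [charKer]

theorem tauInfty_eq_gelfand_on_M'_aux :
    Function.Bijective (gelfandMap A) ∧
      restrictTop A (PrimSet A) (tauInfty A) = gelfandTop A := by
  constructor
  · constructor
    · intro φ ψ h
      apply Subtype.ext
      apply char_eq_of_ker_eq A φ.2 ψ.2
      have h1 : charKerIdeal A φ = charKerIdeal A ψ := congrArg Subtype.val h
      exact congrArg Subtype.val h1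
    · rintro ⟨J, φc, hφc⟩
      exact ⟨φc, Subtype.ext hφc⟩
  · refine TopologicalSpace.ext_iff.mpr fun V => ⟨?_, ?_⟩
    · -- restrict-open → gelfand-open
      intro hV
      rw [restrictTop] at hV
      obtain ⟨U, hU, hUV⟩ := (isOpen_induced_iff (t := tauInfty A)).mp hV
      have hU1 : IsOpen[tauK A 1] U := by
        rw [tauInfty, isOpen_iSup_iff] at hU
        exact hU 1
      rw [tauK, isOpen_coinduced] at hU1
      rw [gelfandTop, isOpen_coinduced, ← hUV]
      have heq : gelfandMap A ⁻¹' (Subtype.val ⁻¹' U) =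
          charSeminorm A ⁻¹' (kerSK A 1 ⁻¹' U) := by
        ext φc
        simp only [Set.mem_preimage]
        rw [kerSK_charSeminorm]
        rfl
      rw [heq]
      exact hU1.preimage (charSeminorm_cont A)
    · -- gelfand-open → restrict-open
      intro hV
      rw [gelfandTop, isOpen_coinduced] at hV
      have key : ∀ φc : Characters A, φc ∈ gelfandMap A ⁻¹' V →
          ∃ (If : Set A) (εf : A → ℝ), If.Finite ∧ (∀ a ∈ If, 0 < εf a) ∧
            ∀ ψc : Characters A, (∀ a ∈ If, ‖ψc.1 a - φc.1 a‖ < εf a) →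
              ψc ∈ gelfandMap A ⁻¹' V := by
        intro φc hφc
        have hnh : gelfandMap A ⁻¹' V ∈ 𝓝 φc := hV.mem_nhds hφc
        rw [nhds_subtype_eq_comap] at hnh
        obtain ⟨W', hW'nhds, hW'sub⟩ := Filter.mem_comap.mp hnh
        rw [nhds_pi] at hW'nhds
        obtain ⟨If, hIfin, t, ht, hpisub⟩ := Filter.mem_pi.mp hW'nhds
        have hball : ∀ a : A, ∃ ε : ℝ, 0 < ε ∧ Metric.ball (φc.1 a) ε ⊆ t a := by
          intro a
          obtain ⟨ε, hε, hb⟩ := Metric.mem_nhds_iff.mp (ht a)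
          exact ⟨ε, hε, hb⟩
        choose εf hεf hbs using hball
        refine ⟨If, εf, hIfin, fun a _ => hεf a, ?_⟩
        intro ψc hψc
        apply hW'sub
        show ψc.1 ∈ W'
        apply hpisub
        intro a haI
        apply hbs a
        rw [Metric.mem_ball, dist_eq_norm]
        exact hψc a haI
      choose If εf hIfin hεpos himp using key
      rw [restrictTop]
      refine (isOpen_induced_iff (t := tauInfty A)).mpr
        ⟨⋃ (φc : Characters A) (h : φc ∈ gelfandMap A ⁻¹' V),
          Uset A φc.1 (If φc h) (εf φc h), ?_, ?_⟩
      · letI := tauInfty A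
        exact isOpen_iUnion fun φc => isOpen_iUnion fun h =>
          isOpen_Uset A φc.1 _ (hIfin φc h) _
      · ext J
        simp only [Set.mem_preimage, Set.mem_iUnion]
        constructor
        · rintro ⟨φc, h, hJ⟩
          obtain ⟨ψc, hψc⟩ := J.2
          have hker : charKer A ψc.1 = (J : ClosedIdeals A).1 :=
            congrArg Subtype.val hψc
          have hclose := hJ.2 ψc.1 ψc.2 hker
          have hmem := himp φc h ψc hclose
          have hgm : gelfandMap A ψc = J := Subtype.ext hψc
          rw [← hgm]
          exact hmem
        · intro hJV
          obtain ⟨ψc, hψc⟩ := J.2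
          have hmemW : ψc ∈ gelfandMap A ⁻¹' V := by
            show gelfandMap A ψc ∈ V
            have hgm : gelfandMap A ψc = J := Subtype.ext hψc
            rw [hgm]; exact hJV
          exact ⟨ψc, hmemW,
            mem_Uset A ψc.2 _ _ (fun a ha => hεpos ψc hmemW a ha) (J : ClosedIdeals A)
              (congrArg Subtype.val hψc)⟩
/-- The `τ_∞` part of Theorem 1.6 of the paper: for a Banach algebra `A`, the map
`φ ↦ ker φ` is a bijection from the character space onto
`M′ = {ker φ : φ a character}`, and the restriction of `τ_∞` to `M′` coincides
with the Gelfand topology transported by this bijection. -/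
theorem tauInfty_eq_gelfand_on_M' :
    Function.Bijective (gelfandMap A) ∧
      restrictTop A (PrimSet A) (tauInfty A) = gelfandTop A := by
  exact tauInfty_eq_gelfand_on_M'_aux A

end BanachAlgebraPrelude
end

section
/- Let A be a Banach algebra over ℂ with weak spectral synthesis, that is: (i) Prime(A) is locally compact in the hull-kernel topology; (ii) the hull-kernel topology has the normality property on Prime(A); and (iii) every proper closed two-sided ideal of A equals the intersection of the closed prime two-sided ideals containing it. If I is a closed two-sided ideal of A and J is a closed two-sided ideal of the Banach algebra I, then J is a two-sided ideal of A. -/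
set_option linter.unusedSectionVars false

open Filter Topology

section BanachAlgebraPrelude

variable (A : Type*) [NonUnitalNormedRing A] [NormedSpace ℂ A]
  [IsScalarTower ℂ A A] [SMulCommClass ℂ A A] [CompleteSpace A]

/-- `J` is a closed two-sided ideal of the Banach algebra `Ia` (where `Ia ⊆ A`):
`J` is a closed subset of `Ia`, a `ℂ`-subspace, and closed under multiplication
by elements of `Ia` on both sides. -/
def IsClosedIdealIn (Ia : Set A) (J : Set A) : Prop :=
  IsClosed J ∧ J ⊆ Ia ∧ (0 : A) ∈ J ∧ (∀ x ∈ J, ∀ y ∈ J, x + y ∈ J) ∧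
    (∀ (c : ℂ), ∀ x ∈ J, c • x ∈ J) ∧ ∀ x ∈ J, ∀ a ∈ Ia, a * x ∈ J ∧ x * a ∈ J

theorem aux_map_mem {s : Set A} (M : Submodule ℂ A) (hM : IsClosed (M : Set A))
    (f : A →ₗ[ℂ] A) (hf : Continuous f) (h : ∀ z ∈ s, f z ∈ M) :
    ∀ z ∈ closure (Submodule.span ℂ s : Set A), f z ∈ M := by
  intro z hz
  have h1 : Submodule.span ℂ s ≤ Submodule.comap f M := Submodule.span_le.2 h
  have h2 : closure (Submodule.span ℂ s : Set A) ⊆ f ⁻¹' (M : Set A) :=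
    closure_minimal (fun y hy => h1 hy) (hM.preimage hf)
  exact h2 hz

/-- Proposition 1.14 of the paper: if `A` has weak spectral synthesis, `I` is a
closed two-sided ideal of `A` and `J` is a closed two-sided ideal of the Banach
algebra `I`, then `J` is a two-sided ideal of `A`. -/
theorem ideal_of_ideal_is_ideal
    (h1 : @LocallyCompactSpace (PrimeSet A) (restrictTop A (PrimeSet A) (tauW A)))
    (h2 : HasNormality A (PrimeSet A) (restrictTop A (PrimeSet A) (tauW A)))
    (h3 : ∀ I : ClosedIdeals A, I.1 ≠ Set.univ →
      I.1 = ⋂₀ {P : Set A | IsPrimeIdealSet A P ∧ I.1 ⊆ P})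
    (I : ClosedIdeals A) (J : Set A) (hJ : IsClosedIdealIn A I.1 J) :
    IsIdealSet A J := by
  obtain ⟨hJc, hJI, hJ0, hJadd, hJsmul, hJmul⟩ := hJ
  obtain ⟨hIc, hI0, hIadd, hIsmul, hImul⟩ := I.2
  refine ⟨hJ0, hJadd, hJsmul, ?_⟩
  intro x hx a
  -- `J` and `I` as submodules of `A`
  let Jm : Submodule ℂ A :=
    { carrier := J
      add_mem' := fun {u v} hu hv => hJadd u hu v hv
      zero_mem' := hJ0
      smul_mem' := fun c u hu => hJsmul c u hu }
  let Im : Submodule ℂ A :=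
    { carrier := I.1
      add_mem' := fun {u v} hu hv => hIadd u hu v hv
      zero_mem' := hI0
      smul_mem' := fun c u hu => hIsmul c u hu }
  -- the closed ideal `K` of `A` generated by `x`
  let S1 : Set A :=
    {y | y = x ∨ (∃ a', y = a' * x) ∨ (∃ a', y = x * a') ∨ ∃ a' b, y = a' * x * b}
  let K : Submodule ℂ A := (Submodule.span ℂ S1).topologicalClosure
  have hKcoe : (K : Set A) = closure (Submodule.span ℂ S1 : Set A) :=
    Submodule.topologicalClosure_coe _
  have hS1K : S1 ⊆ (K : Set A) := fun z hz => by
    rw [hKcoe]; exact subset_closure (Submodule.subset_span hz)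
  have hKclosed : IsClosed (K : Set A) := Submodule.isClosed_topologicalClosure _
  -- `K ⊆ I`
  have hKI : (K : Set A) ⊆ I.1 := by
    have hle : Submodule.span ℂ S1 ≤ Im := by
      rw [Submodule.span_le]
      rintro z (rfl | ⟨a', rfl⟩ | ⟨a', rfl⟩ | ⟨a', b, rfl⟩)
      · exact hJI hx
      · exact (hImul x (hJI hx) a').1
      · exact (hImul x (hJI hx) a').2
      · exact (hImul (a' * x) (hImul x (hJI hx) a').1 b).2
    rw [hKcoe]
    exact closure_minimal (fun z hz => hle hz) hIc
  -- `K` is a two-sided ideal of `A`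
  have hKmul : ∀ z ∈ (K : Set A), ∀ a' : A, a' * z ∈ (K : Set A) ∧ z * a' ∈ (K : Set A) := by
    intro z hz a'
    rw [hKcoe] at hz
    constructor
    · have := aux_map_mem A K hKclosed (LinearMap.mulLeft ℂ a')
        (continuous_mul_left a') ?_ z hz
      · simpa using this
      rintro w (rfl | ⟨c, rfl⟩ | ⟨c, rfl⟩ | ⟨c, d, rfl⟩) <;>
        simp only [LinearMap.mulLeft_apply]
      · exact hS1K (Or.inr (Or.inl ⟨a', rfl⟩))
      · have he : a' * (c * x) = (a' * c) * x := by simp only [mul_assoc]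
        rw [he]; exact hS1K (Or.inr (Or.inl ⟨a' * c, rfl⟩))
      · have he : a' * (x * c) = a' * x * c := by simp only [mul_assoc]
        rw [he]; exact hS1K (Or.inr (Or.inr (Or.inr ⟨a', c, rfl⟩)))
      · have he : a' * (c * x * d) = (a' * c) * x * d := by simp only [mul_assoc]
        rw [he]; exact hS1K (Or.inr (Or.inr (Or.inr ⟨a' * c, d, rfl⟩)))
    · have := aux_map_mem A K hKclosed (LinearMap.mulRight ℂ a')
        (continuous_mul_right a') ?_ z hz
      · simpa using this
      rintro w (rfl | ⟨c, rfl⟩ | ⟨c, rfl⟩ | ⟨c, d, rfl⟩) <;>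
        simp only [LinearMap.mulRight_apply]
      · exact hS1K (Or.inr (Or.inr (Or.inl ⟨a', rfl⟩)))
      · exact hS1K (Or.inr (Or.inr (Or.inr ⟨c, a', rfl⟩)))
      · have he : (x * c) * a' = x * (c * a') := by simp only [mul_assoc]
        rw [he]; exact hS1K (Or.inr (Or.inr (Or.inl ⟨c * a', rfl⟩)))
      · have he : (c * x * d) * a' = c * x * (d * a') := by simp only [mul_assoc]
        rw [he]; exact hS1K (Or.inr (Or.inr (Or.inr ⟨c, d * a', rfl⟩)))
  have hKideal : IsClosedIdeal A (K : Set A) :=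
    ⟨hKclosed, K.zero_mem, fun u hu v hv => K.add_mem hu hv,
      fun c u hu => K.smul_mem c hu, hKmul⟩
  let Kc : ClosedIdeals A := ⟨(K : Set A), hKideal⟩
  -- the closed ideal `K2 = cl(span(K·K))`
  let S2 : Set A := {y | ∃ u ∈ (K : Set A), ∃ v ∈ (K : Set A), y = u * v}
  let K2 : Submodule ℂ A := (Submodule.span ℂ S2).topologicalClosure
  have hK2coe : (K2 : Set A) = closure (Submodule.span ℂ S2 : Set A) :=
    Submodule.topologicalClosure_coe _
  have hS2K2 : S2 ⊆ (K2 : Set A) := fun z hz => by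
    rw [hK2coe]; exact subset_closure (Submodule.subset_span hz)
  have hK2closed : IsClosed (K2 : Set A) := Submodule.isClosed_topologicalClosure _
  have hK2mul : ∀ z ∈ (K2 : Set A), ∀ a' : A,
      a' * z ∈ (K2 : Set A) ∧ z * a' ∈ (K2 : Set A) := by
    intro z hz a'
    rw [hK2coe] at hz
    constructor
    · have := aux_map_mem A K2 hK2closed (LinearMap.mulLeft ℂ a')
        (continuous_mul_left a') ?_ z hz
      · simpa using this
      rintro w ⟨p, hp, q, hq, rfl⟩
      simp only [LinearMap.mulLeft_apply]
      have he : a' * (p * q) = (a' * p) * q := by simp only [mul_assoc]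
      rw [he]; exact hS2K2 ⟨a' * p, (hKmul p hp a').1, q, hq, rfl⟩
    · have := aux_map_mem A K2 hK2closed (LinearMap.mulRight ℂ a')
        (continuous_mul_right a') ?_ z hz
      · simpa using this
      rintro w ⟨p, hp, q, hq, rfl⟩
      simp only [LinearMap.mulRight_apply]
      have he : (p * q) * a' = p * (q * a') := by simp only [mul_assoc]
      rw [he]; exact hS2K2 ⟨p, hp, q * a', (hKmul q hq a').2, rfl⟩
  have hK2ideal : IsClosedIdeal A (K2 : Set A) :=
    ⟨hK2closed, K2.zero_mem, fun u hu v hv => K2.add_mem hu hv,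
      fun c u hu => K2.smul_mem c hu, hK2mul⟩
  let K2c : ClosedIdeals A := ⟨(K2 : Set A), hK2ideal⟩
  -- weak spectral synthesis: `K ⊆ K2`
  have hKK2 : (K : Set A) ⊆ (K2 : Set A) := by
    by_cases hU : (K2 : Set A) = Set.univ
    · rw [hU]; exact fun _ _ => trivial
    · have heq := h3 K2c hU
      intro z hz
      have hm : z ∈ ⋂₀ {P : Set A | IsPrimeIdealSet A P ∧ (K2 : Set A) ⊆ P} := by
        refine Set.mem_sInter.mpr ?_
        rintro P ⟨⟨hPci, hPprop, hPprime⟩, hK2P⟩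
        have hKP := hPprime Kc Kc
          (fun u hu v hv => hK2P (hS2K2 ⟨u, hu, v, hv, rfl⟩))
        rcases hKP with h | h
        · exact h hz
        · exact h hz
      rw [← heq] at hm
      exact hm
  -- `I · K · I ⊆ J`
  have hC1 : ∀ u ∈ I.1, ∀ w ∈ I.1, ∀ v ∈ (K : Set A), u * v * w ∈ J := by
    intro u hu w hw v hv
    rw [hKcoe] at hv
    have := aux_map_mem A Jm hJc
      ((LinearMap.mulRight ℂ w).comp (LinearMap.mulLeft ℂ u))
      ((continuous_mul_right w).comp (continuous_mul_left u)) ?_ v hv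
    · have h' : u * v * w ∈ Jm := by simpa using this
      exact h'
    rintro z (hz1 | ⟨c, rfl⟩ | ⟨c, rfl⟩ | ⟨c, d, rfl⟩) <;>
      simp only [LinearMap.coe_comp, Function.comp_apply, LinearMap.mulLeft_apply,
        LinearMap.mulRight_apply]
    · rw [hz1]; exact (hJmul (u * x) (hJmul x hx u hu).1 w hw).2
    · have he : u * (c * x) * w = ((u * c) * x) * w := by simp only [mul_assoc]
      rw [he]
      exact (hJmul ((u * c) * x) (hJmul x hx (u * c) (hImul u hu c).2).1 w hw).2
    · have he : u * (x * c) * w = u * (x * (c * w)) := by simp only [mul_assoc]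
      rw [he]
      exact (hJmul (x * (c * w)) (hJmul x hx (c * w) (hImul w hw c).1).2 u hu).1
    · have he : u * (c * x * d) * w = (u * c) * (x * (d * w)) := by simp only [mul_assoc]
      rw [he]
      exact (hJmul (x * (d * w)) (hJmul x hx (d * w) (hImul w hw d).1).2
        (u * c) (hImul u hu c).2).1
  -- `K · K ⊆ J`
  have hC2 : ∀ u ∈ (K : Set A), ∀ v ∈ (K : Set A), u * v ∈ J := by
    intro u hu v hv
    have hu2 : u ∈ closure (Submodule.span ℂ S2 : Set A) := by
      rw [← hK2coe]; exact hKK2 hu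
    have := aux_map_mem A Jm hJc (LinearMap.mulRight ℂ v)
      (continuous_mul_right v) ?_ u hu2
    · have h' : u * v ∈ Jm := by simpa using this
      exact h'
    rintro z ⟨p, hp, q, hq, rfl⟩
    simp only [LinearMap.mulRight_apply]
    exact hC1 p (hKI hp) v (hKI hv) q hq
  -- conclude: `K ⊆ K2 ⊆ J`
  have hK2J : (K2 : Set A) ⊆ J := by
    have hle : Submodule.span ℂ S2 ≤ Jm := by
      rw [Submodule.span_le]
      rintro z ⟨p, hp, q, hq, rfl⟩
      exact hC2 p hp q hq
    rw [hK2coe]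
    exact closure_minimal (fun z hz => hle hz) hJc
  constructor
  · exact hK2J (hKK2 (hS1K (Or.inr (Or.inl ⟨a, rfl⟩))))
  · exact hK2J (hKK2 (hS1K (Or.inr (Or.inr (Or.inl ⟨a, rfl⟩)))))

end BanachAlgebraPrelude
end

section
/- Let A be a commutative Banach algebra over ℂ and let M be a maximal proper ideal of A (an ideal maximal among the ideals different from A; M is not assumed closed or modular). Then the quotient algebra A/M is one-dimensional over ℂ, and either the multiplication induced on A/M is identically zero, or A/M is isomorphic as a ℂ-algebra to ℂ. -/
set_option linter.unusedSectionVars false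

open Filter Topology

section BanachAlgebraPrelude

variable (A : Type*) [NonUnitalNormedRing A] [NormedSpace ℂ A]
  [IsScalarTower ℂ A A] [SMulCommClass ℂ A A] [CompleteSpace A]

section Lemma14Aux

variable {B : Type*} [NonUnitalNormedRing B] [NormedSpace ℂ B]
  [IsScalarTower ℂ B B] [SMulCommClass ℂ B B] [CompleteSpace B]

/-- An ideal, as a `ℂ`-submodule. -/
def idealSub (M : Set B) (hM : IsIdealSet B M) : Submodule ℂ B where
  carrier := M
  add_mem' := fun {x y} hx hy => hM.2.1 x hx y hy
  zero_mem' := hM.1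
  smul_mem' := fun c x hx => hM.2.2.1 c x hx

variable (M : Set B) (hM : IsIdealSet B M)

/-- Multiplication on the quotient by an ideal. -/
noncomputable abbrev qMul : Mul (B ⧸ idealSub M hM) :=
  ⟨fun a b =>
    Quotient.liftOn₂' a b (fun x y => Submodule.Quotient.mk (x * y))
      (fun a₁ a₂ b₁ b₂ h₁ h₂ => by
        have hx : a₁ - b₁ ∈ M := (Submodule.quotientRel_def _).mp h₁
        have hy : a₂ - b₂ ∈ M := (Submodule.quotientRel_def _).mp h₂
        rw [Submodule.Quotient.eq]
        have hid : a₁ * a₂ - b₁ * b₂ = a₁ * (a₂ - b₂) + (a₁ - b₁) * b₂ := by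
          rw [mul_sub, sub_mul]; abel
        show a₁ * a₂ - b₁ * b₂ ∈ M
        rw [hid]
        exact hM.2.1 _ (hM.2.2.2 _ hy a₁).1 _ (hM.2.2.2 _ hx b₂).2)⟩

set_option maxHeartbeats 1000000 in
/-- The quotient by an ideal admitting a modular unit `u` is a commutative ring. -/
noncomputable abbrev qCommRing (hcomm : ∀ x y : B, x * y = y * x) (u : B)
    (hmod : ∀ x : B, x - u * x ∈ M) : CommRing (B ⧸ idealSub M hM) := by
  letI := qMul M hM
  have hMneg : ∀ x ∈ M, -x ∈ M := fun x hx => by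
    simpa using hM.2.2.1 (-1) x hx
  have hmk_eq : ∀ x y : B, x - y ∈ M →
      (Submodule.Quotient.mk x : B ⧸ idealSub M hM) = Submodule.Quotient.mk y := by
    intro x y hxy
    rw [Submodule.Quotient.eq]
    exact hxy
  exact
  { (inferInstance : AddCommGroup (B ⧸ idealSub M hM)) with
    mul := (· * ·)
    one := Submodule.Quotient.mk u
    left_distrib := fun a b c => by
      obtain ⟨x, rfl⟩ := Submodule.Quotient.mk_surjective _ a
      obtain ⟨y, rfl⟩ := Submodule.Quotient.mk_surjective _ b
      obtain ⟨z, rfl⟩ := Submodule.Quotient.mk_surjective _ c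
      show (Submodule.Quotient.mk (x * (y + z)) : B ⧸ idealSub M hM) =
        Submodule.Quotient.mk (x * y) + Submodule.Quotient.mk (x * z)
      rw [← Submodule.Quotient.mk_add, mul_add]
    right_distrib := fun a b c => by
      obtain ⟨x, rfl⟩ := Submodule.Quotient.mk_surjective _ a
      obtain ⟨y, rfl⟩ := Submodule.Quotient.mk_surjective _ b
      obtain ⟨z, rfl⟩ := Submodule.Quotient.mk_surjective _ c
      show (Submodule.Quotient.mk ((x + y) * z) : B ⧸ idealSub M hM) =
        Submodule.Quotient.mk (x * z) + Submodule.Quotient.mk (y * z)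
      rw [← Submodule.Quotient.mk_add, add_mul]
    zero_mul := fun a => by
      obtain ⟨x, rfl⟩ := Submodule.Quotient.mk_surjective _ a
      show (Submodule.Quotient.mk ((0 : B) * x) : B ⧸ idealSub M hM) =
        Submodule.Quotient.mk (0 : B)
      rw [zero_mul]
    mul_zero := fun a => by
      obtain ⟨x, rfl⟩ := Submodule.Quotient.mk_surjective _ a
      show (Submodule.Quotient.mk (x * (0 : B)) : B ⧸ idealSub M hM) =
        Submodule.Quotient.mk (0 : B)
      rw [mul_zero]
    mul_assoc := fun a b c => by
      obtain ⟨x, rfl⟩ := Submodule.Quotient.mk_surjective _ a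
      obtain ⟨y, rfl⟩ := Submodule.Quotient.mk_surjective _ b
      obtain ⟨z, rfl⟩ := Submodule.Quotient.mk_surjective _ c
      show (Submodule.Quotient.mk (x * y * z) : B ⧸ idealSub M hM) =
        Submodule.Quotient.mk (x * (y * z))
      rw [mul_assoc]
    one_mul := fun a => by
      obtain ⟨x, rfl⟩ := Submodule.Quotient.mk_surjective _ a
      show (Submodule.Quotient.mk (u * x) : B ⧸ idealSub M hM) = Submodule.Quotient.mk x
      exact hmk_eq _ _ (by simpa [neg_sub] using hMneg _ (hmod x))
    mul_one := fun a => by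
      obtain ⟨x, rfl⟩ := Submodule.Quotient.mk_surjective _ a
      show (Submodule.Quotient.mk (x * u) : B ⧸ idealSub M hM) = Submodule.Quotient.mk x
      refine hmk_eq _ _ ?_
      rw [hcomm x u]
      simpa [neg_sub] using hMneg _ (hmod x)
    mul_comm := fun a b => by
      obtain ⟨x, rfl⟩ := Submodule.Quotient.mk_surjective _ a
      obtain ⟨y, rfl⟩ := Submodule.Quotient.mk_surjective _ b
      show (Submodule.Quotient.mk (x * y) : B ⧸ idealSub M hM) =
        Submodule.Quotient.mk (y * x)
      rw [hcomm x y] }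

set_option maxHeartbeats 1000000 in
/-- The quotient is a `ℂ`-algebra. -/
noncomputable abbrev qAlgebra (hcomm : ∀ x y : B, x * y = y * x) (u : B)
    (hmod : ∀ x : B, x - u * x ∈ M) :
    @Algebra ℂ (B ⧸ idealSub M hM) _
      (qCommRing M hM hcomm u hmod).toRing.toSemiring := by
  letI := qCommRing M hM hcomm u hmod
  have hmk : ∀ x y : B, (Submodule.Quotient.mk (x * y) : B ⧸ idealSub M hM) =
      Submodule.Quotient.mk x * Submodule.Quotient.mk y := fun _ _ => rfl
  exact Algebra.ofModule
    (fun c a b => by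
      obtain ⟨x, rfl⟩ := Submodule.Quotient.mk_surjective _ a
      obtain ⟨y, rfl⟩ := Submodule.Quotient.mk_surjective _ b
      rw [← Submodule.Quotient.mk_smul, ← hmk, ← hmk, ← Submodule.Quotient.mk_smul,
        smul_mul_assoc])
    (fun c a b => by
      obtain ⟨x, rfl⟩ := Submodule.Quotient.mk_surjective _ a
      obtain ⟨y, rfl⟩ := Submodule.Quotient.mk_surjective _ b
      rw [← Submodule.Quotient.mk_smul, ← hmk, ← hmk, ← Submodule.Quotient.mk_smul,
        mul_smul_comm])

set_option maxHeartbeats 1000000 in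
/-- The quotient by a closed ideal is a normed ring. -/
noncomputable abbrev qNormedRing (hcomm : ∀ x y : B, x * y = y * x) (u : B)
    (hmod : ∀ x : B, x - u * x ∈ M)
    (hclosed : IsClosed M) : NormedRing (B ⧸ idealSub M hM) := by
  letI := qCommRing M hM hcomm u hmod
  haveI : IsClosed ((idealSub M hM : Submodule ℂ B) : Set B) := hclosed
  have hmk : ∀ x y : B, (Submodule.Quotient.mk (x * y) : B ⧸ idealSub M hM) =
      Submodule.Quotient.mk x * Submodule.Quotient.mk y := fun _ _ => rfl
  exact
  { (inferInstance : Ring (B ⧸ idealSub M hM)),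
    (inferInstance : NormedAddCommGroup (B ⧸ idealSub M hM)) with
    dist_eq := fun x y => by rw [dist_eq_norm, neg_add_eq_sub, norm_sub_rev]
    norm_mul_le := fun x y => le_of_forall_pos_le_add fun ε hε => by
      have h0 := ((Metric.nhds_basis_ball.prod_nhds Metric.nhds_basis_ball).tendsto_iff
        Metric.nhds_basis_ball).mp (continuous_mul.tendsto (‖x‖, ‖y‖)) ε hε
      simp only [Set.mem_prod, Metric.mem_ball, and_imp, Prod.forall, exists_prop,
        Prod.exists] at h0
      rcases h0 with ⟨ε₁, ε₂, ⟨h₁, h₂⟩, h⟩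
      obtain ⟨a, rfl, ha⟩ := Submodule.Quotient.norm_mk_lt x h₁
      obtain ⟨b, rfl, hb⟩ := Submodule.Quotient.norm_mk_lt y h₂
      simp only [dist, abs_sub_lt_iff] at h
      specialize h ‖a‖ ‖b‖
        ⟨by linarith, by linarith [Submodule.Quotient.norm_mk_le (idealSub M hM) a]⟩
        ⟨by linarith, by linarith [Submodule.Quotient.norm_mk_le (idealSub M hM) b]⟩
      calc ‖(Submodule.Quotient.mk a : B ⧸ idealSub M hM) * Submodule.Quotient.mk b‖
          = ‖(Submodule.Quotient.mk (a * b) : B ⧸ idealSub M hM)‖ := by rw [hmk]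
        _ ≤ ‖a * b‖ := Submodule.Quotient.norm_mk_le (idealSub M hM) (a * b)
        _ ≤ ‖a‖ * ‖b‖ := norm_mul_le a b
        _ ≤ _ := (sub_lt_iff_lt_add'.mp h.1).le }

set_option maxHeartbeats 400000 in
theorem lemma14_char (hcomm : ∀ x y : B, x * y = y * x)
    (M : Set B) (hM : IsIdealSet B M) (hproper : M ≠ Set.univ)
    (hmax : ∀ N : Set B, IsIdealSet B N → M ⊆ N → N = M ∨ N = Set.univ)
    (hne : ∃ x y : B, x * y ∉ M) :
    ∃ φ : B → ℂ, (∀ x y : B, φ (x + y) = φ x + φ y) ∧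
      (∀ (c : ℂ) (x : B), φ (c • x) = c * φ x) ∧
      (∀ x y : B, φ (x * y) = φ x * φ y) ∧
      Function.Surjective φ ∧ M = {x | φ x = 0} := by
  obtain ⟨hM0, hMadd, hMsmul, hMmul⟩ := hM
  have hMneg : ∀ x ∈ M, -x ∈ M := fun x hx => by
    simpa using hMsmul (-1) x hx
  have hMsub : ∀ x ∈ M, ∀ y ∈ M, x - y ∈ M := fun x hx y hy => by
    simpa [sub_eq_add_neg] using hMadd x hx (-y) (hMneg y hy)
  -- Every element of `A` is generated mod `M` by any `b ∉ M`.
  have hgen : ∀ b, b ∉ M → ∀ x : B, ∃ m ∈ M, ∃ z : B, x = m + z * b := by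
    intro b hb x
    set N : Set B := {x | ∃ m ∈ M, ∃ z : B, x = m + z * b} with hN
    have hNideal : IsIdealSet B N := by
      refine ⟨⟨0, hM0, 0, by simp⟩, ?_, ?_, ?_⟩
      · rintro x ⟨m, hm, z, rfl⟩ y ⟨m', hm', z', rfl⟩
        exact ⟨m + m', hMadd _ hm _ hm', z + z', by rw [add_mul]; abel⟩
      · rintro c x ⟨m, hm, z, rfl⟩
        exact ⟨c • m, hMsmul c m hm, c • z, by rw [smul_add, smul_mul_assoc]⟩
      · rintro x ⟨m, hm, z, rfl⟩ a
        constructor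
        · exact ⟨a * m, (hMmul m hm a).1, a * z, by rw [mul_add, mul_assoc]⟩
        · exact ⟨m * a, (hMmul m hm a).2, z * a, by
            rw [add_mul, mul_assoc, hcomm b a, ← mul_assoc]⟩
    have hMN : M ⊆ N := fun x hx => ⟨x, hx, 0, by simp⟩
    rcases hmax N hNideal hMN with hNM | hNuniv
    · exfalso
      have hzb : ∀ z : B, z * b ∈ M := fun z => by
        have hz : z * b ∈ N := ⟨0, hM0, z, by simp⟩
        rwa [hNM] at hz
      set K : Set B := {x | ∀ y : B, x * y ∈ M} with hK
      have hKideal : IsIdealSet B K := by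
        refine ⟨fun y => by simpa using hM0, ?_, ?_, ?_⟩
        · intro x hx y hy z
          have : (x + y) * z = x * z + y * z := add_mul x y z
          rw [this]; exact hMadd _ (hx z) _ (hy z)
        · intro c x hx y
          rw [smul_mul_assoc]; exact hMsmul c _ (hx y)
        · intro x hx a
          constructor
          · intro y; rw [mul_assoc]; exact (hMmul _ (hx y) a).1
          · intro y; rw [mul_assoc]; exact hx (a * y)
      have hMK : M ⊆ K := fun x hx y => (hMmul x hx y).2
      rcases hmax K hKideal hMK with hKM | hKuniv
      · refine hb ?_
        rw [← hKM]
        exact fun y => by rw [hcomm]; exact hzb y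
      · obtain ⟨x0, y0, hx0y0⟩ := hne
        have : x0 ∈ K := by rw [hKuniv]; trivial
        exact hx0y0 (this y0)
    · have : x ∈ N := by rw [hNuniv]; trivial
      exact this
  -- produce a modular unit `u`
  obtain ⟨x0, y0, hx0y0⟩ := hne
  have hb0 : x0 ∉ M := fun h => hx0y0 (hMmul x0 h y0).2
  obtain ⟨m0, hm0, u, hbu⟩ := hgen x0 hb0 x0
  have hub : x0 - u * x0 ∈ M := by
    nth_rewrite 1 [hbu]
    rw [add_sub_cancel_right]; exact hm0
  have hmod : ∀ x : B, x - u * x ∈ M := by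
    intro x
    obtain ⟨m', hm', z, hx'⟩ := hgen x0 hb0 x
    have hc : u * (z * x0) = z * (u * x0) := by
      rw [← mul_assoc, hcomm u z, mul_assoc]
    have hrw : x - u * x = (m' - u * m') + z * (x0 - u * x0) := by
      rw [hx', mul_add, hc, mul_sub]; abel
    rw [hrw]
    exact hMadd _ (hMsub m' hm' _ (hMmul m' hm' u).1) _ (hMmul _ hub z).1
  have hunotM : u ∉ M := by
    intro hu
    apply hproper
    ext x
    simp only [Set.mem_univ, iff_true]
    have := hMadd _ (hmod x) _ (hMmul u hu x).2
    simpa using this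
  -- distance from `u` to `M` is at least one
  have hdist : ∀ m ∈ M, (1 : ℝ) ≤ ‖u - m‖ := by
    intro m hm
    by_contra hlt
    push_neg at hlt
    set d := u - m with hd
    have hdn : ‖d‖ < 1 := hlt
    let p : ℕ → B := fun n => Nat.rec d (fun _ q => q * d) n
    have hp0 : p 0 = d := rfl
    have hps : ∀ n, p (n + 1) = p n * d := fun n => rfl
    have hpnorm : ∀ n, ‖p n‖ ≤ ‖d‖ ^ (n + 1) := by
      intro n
      induction n with
      | zero => simp [hp0]
      | succ n ih =>
        calc ‖p (n + 1)‖ ≤ ‖p n‖ * ‖d‖ := norm_mul_le _ _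
          _ ≤ ‖d‖ ^ (n + 1) * ‖d‖ :=
            mul_le_mul_of_nonneg_right ih (norm_nonneg d)
          _ = ‖d‖ ^ (n + 1 + 1) := (pow_succ _ _).symm
    have hsum : Summable p := by
      refine Summable.of_norm_bounded (g := fun n => ‖d‖ ^ (n + 1)) ?_ hpnorm
      have := (summable_geometric_of_lt_one (norm_nonneg d) hdn).mul_left ‖d‖
      simpa [pow_succ'] using this
    set y := ∑' n, p n with hy
    have hyd : y * d = ∑' n, p (n + 1) := by
      calc y * d = ∑' n, p n * d := ((hsum.hasSum.mul_right d).tsum_eq).symm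
        _ = ∑' n, p (n + 1) := tsum_congr fun n => (hps n).symm
    have hshift : y = d + y * d := by
      rw [hyd, hy, Summable.tsum_eq_zero_add hsum, hp0]
    have hyu : y * u - y ∈ M := by
      have h1 := hmod y
      have h2 : y * u - y = -(y - u * y) := by rw [hcomm y u]; abel
      rw [h2]; exact hMneg _ h1
    have hdM : d ∈ M := by
      have h2 : y * d = y * u - y * m := by rw [hd, mul_sub]
      have h5 : d = y - y * d := eq_sub_of_add_eq hshift.symm
      rw [h2] at h5
      have h6 : d = -(y * u - y) + y * m := by rw [h5]; abel
      rw [h6]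
      exact hMadd _ (hMneg _ hyu) _ (hMmul m hm y).1
    have hudm : u = d + m := by rw [hd]; abel
    have : u ∈ M := by rw [hudm]; exact hMadd d hdM m hm
    exact hunotM this
  -- M is closed
  have hclosureIdeal : IsIdealSet B (closure M) := by
    refine ⟨subset_closure hM0, ?_, ?_, ?_⟩
    · intro x hx y hy
      exact map_mem_closure₂ continuous_add hx hy fun a ha b hb => hMadd a ha b hb
    · intro c x hx
      exact map_mem_closure (continuous_const_smul c) hx fun a ha => hMsmul c a ha
    · intro x hx a
      constructor
      · exact map_mem_closure (continuous_mul_left a) hx fun b hb => (hMmul b hb a).1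
      · exact map_mem_closure (f := fun b => b * a) (continuous_mul_right a) hx
          fun b hb => (hMmul b hb a).2
  have hclosed : IsClosed M := by
    rcases hmax (closure M) hclosureIdeal subset_closure with h | h
    · rw [← h]; exact isClosed_closure
    · exfalso
      have hu : u ∈ closure M := by rw [h]; trivial
      rcases Metric.mem_closure_iff.mp hu 1 one_pos with ⟨m, hm, hdm⟩
      rw [dist_eq_norm] at hdm
      exact absurd (hdist m hm) (not_le.mpr hdm)
  -- the quotient Banach algebra
  have hMfull : IsIdealSet B M := ⟨hM0, hMadd, hMsmul, hMmul⟩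
  letI instCommRingQ : CommRing (B ⧸ idealSub M hMfull) :=
    qCommRing M hMfull hcomm u hmod
  have hmk_mul : ∀ x y : B,
      (Submodule.Quotient.mk (x * y) : B ⧸ idealSub M hMfull) =
        Submodule.Quotient.mk x * Submodule.Quotient.mk y := fun _ _ => rfl
  have hmk_one : (1 : B ⧸ idealSub M hMfull) = Submodule.Quotient.mk u := rfl
  have hmk_eq : ∀ x y : B, x - y ∈ M →
      (Submodule.Quotient.mk x : B ⧸ idealSub M hMfull) = Submodule.Quotient.mk y := by
    intro x y hxy
    rw [Submodule.Quotient.eq]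
    exact hxy
  letI instAlgQ : Algebra ℂ (B ⧸ idealSub M hMfull) := qAlgebra M hMfull hcomm u hmod
  haveI hSclosed : IsClosed ((idealSub M hMfull : Submodule ℂ B) : Set B) := hclosed
  letI instNormedRingQ : NormedRing (B ⧸ idealSub M hMfull) :=
    qNormedRing M hMfull hcomm u hmod hclosed
  letI instNormedAlgQ : NormedAlgebra ℂ (B ⧸ idealSub M hMfull) :=
    { instAlgQ with norm_smul_le := fun c q => norm_smul_le c q }
  have hA : ∀ {a : B ⧸ idealSub M hMfull}, IsUnit a ↔ a ≠ 0 := by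
    intro a
    constructor
    · rintro ⟨v, rfl⟩ h0
      have h1 : (1 : B ⧸ idealSub M hMfull) = 0 := by rw [← v.mul_inv, h0, zero_mul]
      have h2 : u ∈ M := by
        have := (Submodule.Quotient.mk_eq_zero _).mp (hmk_one ▸ h1)
        exact this
      exact hunotM h2
    · intro ha
      obtain ⟨x, rfl⟩ := Submodule.Quotient.mk_surjective _ a
      have hx : x ∉ M := fun hxm => ha ((Submodule.Quotient.mk_eq_zero _).mpr hxm)
      obtain ⟨m, hm, z, hz⟩ := hgen x hx u
      have hzx : z * x - u ∈ M := by
        have : z * x - u = -m := by rw [hz]; abel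
        rw [this]; exact hMneg _ hm
      refine IsUnit.of_mul_eq_one (Submodule.Quotient.mk z) ?_
      rw [← hmk_mul, hcomm x z, hmk_one]
      exact hmk_eq _ _ hzx
  have e := NormedRing.algEquivComplexOfComplete (A := B ⧸ idealSub M hMfull) hA
  set φ : B → ℂ := fun x => e.symm (Submodule.Quotient.mk x) with hφ
  have hker : ∀ x : B, φ x = 0 ↔ x ∈ M := by
    intro x
    constructor
    · intro h
      have h2 : (Submodule.Quotient.mk x : B ⧸ idealSub M hMfull) = 0 := by
        have := congrArg e h
        rwa [AlgEquiv.apply_symm_apply, map_zero] at this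
      exact (Submodule.Quotient.mk_eq_zero _).mp h2
    · intro h
      have : (Submodule.Quotient.mk x : B ⧸ idealSub M hMfull) = 0 := (Submodule.Quotient.mk_eq_zero _).mpr h
      rw [hφ]; simp only [this, map_zero]
  refine ⟨φ, ?_, ?_, ?_, ?_, ?_⟩
  · intro x y
    show e.symm (Submodule.Quotient.mk (x + y)) = _
    rw [Submodule.Quotient.mk_add, map_add]
  · intro c x
    show e.symm (Submodule.Quotient.mk (c • x)) = _
    rw [Submodule.Quotient.mk_smul, map_smul, smul_eq_mul]
  · intro x y
    show e.symm (Submodule.Quotient.mk (x * y)) = _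
    rw [hmk_mul, map_mul]
  · intro c
    obtain ⟨x, hx⟩ := Submodule.Quotient.mk_surjective _ (e c)
    exact ⟨x, by rw [hφ]; simp only [hx, AlgEquiv.symm_apply_apply]⟩
  · ext x
    simp only [Set.mem_setOf_eq]
    exact (hker x).symm

end Lemma14Aux

/-- Lemma 1.4 of the paper: if `M` is a maximal proper ideal of a commutative
Banach algebra `A`, then `A/M` is one-dimensional over `ℂ`, and either the
induced multiplication on `A/M` is identically zero, or `A/M` is isomorphic as
a `ℂ`-algebra to `ℂ` (i.e. `M` is the kernel of a surjective algebra
homomorphism `A → ℂ`). -/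
theorem maximal_ideal_quotient (hcomm : ∀ x y : A, x * y = y * x)
    (M : Set A) (hM : IsIdealSet A M) (hproper : M ≠ Set.univ)
    (hmax : ∀ N : Set A, IsIdealSet A N → M ⊆ N → N = M ∨ N = Set.univ) :
    (∃ a : A, a ∉ M ∧ ∀ x : A, ∃ c : ℂ, x - c • a ∈ M) ∧
      ((∀ x y : A, x * y ∈ M) ∨
        ∃ φ : A → ℂ, (∀ x y : A, φ (x + y) = φ x + φ y) ∧
          (∀ (c : ℂ) (x : A), φ (c • x) = c * φ x) ∧
          (∀ x y : A, φ (x * y) = φ x * φ y) ∧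
          Function.Surjective φ ∧ M = {x | φ x = 0}) := by
  obtain ⟨hM0, hMadd, hMsmul, hMmul⟩ := id hM
  by_cases hz : ∀ x y : A, x * y ∈ M
  · -- zero multiplication case
    obtain ⟨a, ha⟩ := (Set.ne_univ_iff_exists_notMem M).mp hproper
    set N : Set A := {x | ∃ c : ℂ, x - c • a ∈ M} with hN
    have hNideal : IsIdealSet A N := by
      refine ⟨⟨0, by simpa using hM0⟩, ?_, ?_, ?_⟩
      · rintro x ⟨c, hc⟩ y ⟨d, hd⟩
        refine ⟨c + d, ?_⟩
        have : x + y - (c + d) • a = (x - c • a) + (y - d • a) := by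
          rw [add_smul]; abel
        rw [this]; exact hMadd _ hc _ hd
      · rintro c' x ⟨c, hc⟩
        refine ⟨c' * c, ?_⟩
        have : c' • x - (c' * c) • a = c' • (x - c • a) := by
          rw [smul_sub, mul_smul]
        rw [this]; exact hMsmul c' _ hc
      · rintro x ⟨c, hc⟩ b
        exact ⟨⟨0, by simpa using hz b x⟩, ⟨0, by simpa using hz x b⟩⟩
    have hMN : M ⊆ N := fun x hx => ⟨0, by simpa using hx⟩
    rcases hmax N hNideal hMN with hNM | hNuniv
    · exfalso
      have : a ∈ N := ⟨1, by simpa using hM0⟩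
      rw [hNM] at this
      exact ha this
    · refine ⟨⟨a, ha, fun x => ?_⟩, Or.inl hz⟩
      have : x ∈ N := by rw [hNuniv]; trivial
      exact this
  · push_neg at hz
    obtain ⟨φ, hadd, hsmul, hmul, hsurj, hkerM⟩ :=
      lemma14_char hcomm M hM hproper hmax hz
    obtain ⟨a, haφ⟩ := hsurj 1
    have haM : a ∉ M := by
      intro h
      rw [hkerM] at h
      simp only [Set.mem_setOf_eq] at h
      rw [h] at haφ
      exact one_ne_zero haφ.symm
    refine ⟨⟨a, haM, fun x => ?_⟩, Or.inr ⟨φ, hadd, hsmul, hmul, hsurj, hkerM⟩⟩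
    refine ⟨φ x, ?_⟩
    rw [hkerM]
    have hsub : ∀ x y : A, φ (x - y) = φ x - φ y := by
      intro x y
      have h1 : φ (x - y) + φ y = φ x := by rw [← hadd, sub_add_cancel]
      linear_combination h1
    show φ (x - φ x • a) = 0
    rw [hsub, hsmul, haφ, mul_one, sub_self]

end BanachAlgebraPrelude
end

section
/- Let A be an algebraically simple Banach algebra over ℂ of dimension greater than one, and let x be a nonzero element of A. Then there exist n ∈ ℕ and elements a_1,…,a_n, b_1,…,b_n, c_1,…,c_n ∈ A such that x = ∑_{i=1}^n a_i x b_i x c_i. -/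
set_option linter.unusedSectionVars false

open Filter Topology

section BanachAlgebraPrelude

variable (A : Type*) [NonUnitalNormedRing A] [NormedSpace ℂ A]
  [IsScalarTower ℂ A A] [SMulCommClass ℂ A A] [CompleteSpace A]

theorem aux_span_isIdealSet (S : Set A)
    (hl : ∀ y ∈ S, ∀ a : A, a * y ∈ Submodule.span ℂ S)
    (hr : ∀ y ∈ S, ∀ a : A, y * a ∈ Submodule.span ℂ S) :
    IsIdealSet A ((Submodule.span ℂ S : Submodule ℂ A) : Set A) := by
  refine ⟨Submodule.zero_mem _, fun x hx y hy => Submodule.add_mem _ hx hy,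
    fun c x hx => Submodule.smul_mem _ c hx, ?_⟩
  intro y hy a
  induction hy using Submodule.span_induction with
  | mem z hz => exact ⟨hl z hz a, hr z hz a⟩
  | zero => exact ⟨by simpa using Submodule.zero_mem (Submodule.span ℂ S),
      by simpa using Submodule.zero_mem (Submodule.span ℂ S)⟩
  | add u v hu hv ihu ihv =>
      exact ⟨by rw [mul_add]; exact Submodule.add_mem _ ihu.1 ihv.1,
        by rw [add_mul]; exact Submodule.add_mem _ ihu.2 ihv.2⟩
  | smul c u hu ihu =>
      exact ⟨by rw [mul_smul_comm]; exact Submodule.smul_mem _ c ihu.1,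
        by rw [smul_mul_assoc]; exact Submodule.smul_mem _ c ihu.2⟩

theorem aux_mul_zero_false
    (hsimple : ∀ I : Set A, IsIdealSet A I → I = {0} ∨ I = Set.univ)
    (hdim : 1 < Module.rank ℂ A) {x : A} (hx : x ≠ 0)
    (hz : ∀ a b : A, a * b = 0) : False := by
  have hJ : IsIdealSet A ((Submodule.span ℂ {x} : Submodule ℂ A) : Set A) := by
    refine ⟨Submodule.zero_mem _, fun u hu v hv => Submodule.add_mem _ hu hv,
      fun c u hu => Submodule.smul_mem _ c hu, ?_⟩
    intro u _ a
    exact ⟨by rw [hz a u]; exact Submodule.zero_mem _,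
      by rw [hz u a]; exact Submodule.zero_mem _⟩
  rcases hsimple _ hJ with h | h
  · have hxJ : x ∈ (Submodule.span ℂ {x} : Submodule ℂ A) :=
      Submodule.subset_span rfl
    have hxJ' : x ∈ ((Submodule.span ℂ {x} : Submodule ℂ A) : Set A) := hxJ
    rw [h] at hxJ'
    exact hx hxJ'
  · have : Module.rank ℂ A ≤ 1 := by
      rw [rank_le_one_iff]
      refine ⟨x, fun v => ?_⟩
      have hv : v ∈ (Submodule.span ℂ {x} : Submodule ℂ A) := by
        have : v ∈ ((Submodule.span ℂ {x} : Submodule ℂ A) : Set A) := by rw [h]; trivial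
        exact this
      exact Submodule.mem_span_singleton.mp hv
    exact absurd hdim (not_lt.mpr this)

/-- From the proof of Theorem 1.13 of the paper: if `A` is an algebraically simple
Banach algebra of dimension greater than one and `x ≠ 0`, then
`x = ∑ i, a i * x * b i * x * c i` for suitable finite families in `A`. -/
theorem exists_triple_representation
    (hsimple : ∀ I : Set A, IsIdealSet A I → I = {0} ∨ I = Set.univ)
    (hdim : 1 < Module.rank ℂ A) (x : A) (hx : x ≠ 0) :
    ∃ (n : ℕ) (a b c : Fin n → A), x = ∑ i, a i * x * b i * x * c i := by
  classical
  set S3 : Set A := {y | ∃ a b c : A, y = a * x * b * x * c} with hS3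
  have hI3 : IsIdealSet A ((Submodule.span ℂ S3 : Submodule ℂ A) : Set A) := by
    apply aux_span_isIdealSet
    · rintro y ⟨p, q, r, rfl⟩ a
      exact Submodule.subset_span ⟨a * p, q, r, by simp [mul_assoc]⟩
    · rintro y ⟨p, q, r, rfl⟩ a
      exact Submodule.subset_span ⟨p, q, r * a, by simp [mul_assoc]⟩
  rcases hsimple _ hI3 with h3 | h3
  · -- span S3 = {0}: derive a contradiction
    exfalso
    have htriple : ∀ a b c : A, a * x * b * x * c = 0 := by
      intro a b c
      have : a * x * b * x * c ∈ ((Submodule.span ℂ S3 : Submodule ℂ A) : Set A) :=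
        Submodule.subset_span ⟨a, b, c, rfl⟩
      rw [h3] at this
      exact this
    set S2 : Set A := {y | ∃ a b : A, y = a * x * b} with hS2
    have hI2 : IsIdealSet A ((Submodule.span ℂ S2 : Submodule ℂ A) : Set A) := by
      apply aux_span_isIdealSet
      · rintro y ⟨p, q, rfl⟩ a
        exact Submodule.subset_span ⟨a * p, q, by simp [mul_assoc]⟩
      · rintro y ⟨p, q, rfl⟩ a
        exact Submodule.subset_span ⟨p, q * a, by simp [mul_assoc]⟩
    rcases hsimple _ hI2 with h2 | h2
    · -- AxA = 0
      have hAxA : ∀ a b : A, a * x * b = 0 := by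
        intro a b
        have : a * x * b ∈ ((Submodule.span ℂ S2 : Submodule ℂ A) : Set A) :=
          Submodule.subset_span ⟨a, b, rfl⟩
        rw [h2] at this
        exact this
      set N : Set A := {y | ∀ a b : A, a * y * b = 0} with hN
      have hIN : IsIdealSet A N := by
        refine ⟨by intro a b; simp, ?_, ?_, ?_⟩
        · intro u hu v hv a b
          have : a * (u + v) * b = a * u * b + a * v * b := by noncomm_ring
          rw [this, hu a b, hv a b, add_zero]
        · intro c u hu a b
          have : a * (c • u) * b = c • (a * u * b) := by
            rw [mul_smul_comm, smul_mul_assoc]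
          rw [this, hu a b, smul_zero]
        · intro u hu a
          constructor
          · intro p q
            have : p * (a * u) * q = (p * a) * u * q := by noncomm_ring
            rw [this, hu (p * a) q]
          · intro p q
            have : p * (u * a) * q = p * u * (a * q) := by noncomm_ring
            rw [this, hu p (a * q)]
      rcases hsimple _ hIN with hn | hn
      · have : x ∈ N := fun a b => hAxA a b
        rw [hn] at this
        exact hx this
      · have h3' : ∀ p q r : A, p * q * r = 0 := by
          intro p q r
          have : q ∈ N := by rw [hn]; trivial
          exact this p r
        set S1 : Set A := {y | ∃ a b : A, y = a * b} with hS1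
        have hI1 : IsIdealSet A ((Submodule.span ℂ S1 : Submodule ℂ A) : Set A) := by
          apply aux_span_isIdealSet
          · rintro y ⟨p, q, rfl⟩ a
            exact Submodule.subset_span ⟨a * p, q, by simp [mul_assoc]⟩
          · rintro y ⟨p, q, rfl⟩ a
            exact Submodule.subset_span ⟨p, q * a, by simp [mul_assoc]⟩
        rcases hsimple _ hI1 with h1 | h1
        · have hmul : ∀ a b : A, a * b = 0 := by
            intro a b
            have : a * b ∈ ((Submodule.span ℂ S1 : Submodule ℂ A) : Set A) :=
              Submodule.subset_span ⟨a, b, rfl⟩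
            rw [h1] at this
            exact this
          exact aux_mul_zero_false A hsimple hdim hx hmul
        · have hmul : ∀ a b : A, a * b = 0 := by
            intro a b
            have ha : a ∈ (Submodule.span ℂ S1 : Submodule ℂ A) := by
              have : a ∈ ((Submodule.span ℂ S1 : Submodule ℂ A) : Set A) := by
                rw [h1]; trivial
              exact this
            induction ha using Submodule.span_induction with
            | mem z hz =>
                obtain ⟨p, q, rfl⟩ := hz
                exact h3' p q b
            | zero => simp
            | add u v hu hv ihu ihv => rw [add_mul, ihu, ihv, add_zero]
            | smul c u hu ihu => rw [smul_mul_assoc, ihu, smul_zero]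
          exact aux_mul_zero_false A hsimple hdim hx hmul
    · -- span S2 = univ : products of two elements of span S2 vanish, so A·A = 0
      have hKK : ∀ y ∈ Submodule.span ℂ S2, ∀ z ∈ Submodule.span ℂ S2, y * z = 0 := by
        intro y hy z hz
        induction hy, hz using Submodule.span_induction₂ with
        | mem_mem u v hu hv =>
            obtain ⟨a, b, rfl⟩ := hu
            obtain ⟨a', b', rfl⟩ := hv
            have : a * x * b * (a' * x * b') = a * x * (b * a') * x * b' := by
              noncomm_ring
            rw [this, htriple a (b * a') b']
        | zero_left v hv => simp
        | zero_right u hu => simp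
        | add_left u v w hu hv hw ihu ihv => rw [add_mul, ihu, ihv, add_zero]
        | add_right u v w hu hv hw ihu ihv => rw [mul_add, ihu, ihv, add_zero]
        | smul_left c u v hu hv ih => rw [smul_mul_assoc, ih, smul_zero]
        | smul_right c u v hu hv ih => rw [mul_smul_comm, ih, smul_zero]
      have hmul : ∀ a b : A, a * b = 0 := by
        intro a b
        have ha : a ∈ (Submodule.span ℂ S2 : Submodule ℂ A) := by
          have : a ∈ ((Submodule.span ℂ S2 : Submodule ℂ A) : Set A) := by
            rw [h2]; trivial
          exact this
        have hb : b ∈ (Submodule.span ℂ S2 : Submodule ℂ A) := by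
          have : b ∈ ((Submodule.span ℂ S2 : Submodule ℂ A) : Set A) := by
            rw [h2]; trivial
          exact this
        exact hKK a ha b hb
      exact aux_mul_zero_false A hsimple hdim hx hmul
  · -- span S3 = univ : extract the representation
    have hxmem : x ∈ (Submodule.span ℂ S3 : Submodule ℂ A) := by
      have : x ∈ ((Submodule.span ℂ S3 : Submodule ℂ A) : Set A) := by
        rw [h3]; trivial
      exact this
    rw [Submodule.mem_span_set'] at hxmem
    obtain ⟨n, f, g, hsum⟩ := hxmem
    choose a b c hg using fun i => (g i).2
    refine ⟨n, fun i => f i • a i, b, c, ?_⟩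
    have hterm : ∀ i : Fin n, (f i • a i) * x * b i * x * c i = f i • ((g i : A)) := by
      intro i
      rw [hg i]
      simp [smul_mul_assoc]
    exact ((Finset.sum_congr rfl fun i _ => hterm i).trans hsum).symm

end BanachAlgebraPrelude
end

section
/- Let A be an algebraically simple Banach algebra over ℂ of dimension greater than one, and let x be a nonzero element of A. Then there exists a constant C > 0 such that for every k ∈ ℕ with k ≥ 1 and every algebra seminorm ρ on A which is not identically zero and satisfies ρ(a) ≤ k‖a‖ for all a ∈ A, one has ρ(x) ≥ C/k³. -/
set_option linter.unusedSectionVars false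
set_option maxHeartbeats 2000000

open Filter Topology

section BanachAlgebraPrelude

variable (A : Type*) [NonUnitalNormedRing A] [NormedSpace ℂ A]
  [IsScalarTower ℂ A A] [SMulCommClass ℂ A A] [CompleteSpace A]

theorem aux_rho_basic {ρ : A → ℝ} {K : ℝ}
    (hadd : ∀ a b : A, ρ (a + b) ≤ ρ a + ρ b)
    (hsmul : ∀ (c : ℂ) (a : A), ρ (c • a) = ‖c‖ * ρ a)
    (hK : ∀ a : A, ρ a ≤ K * ‖a‖) :
    ρ 0 = 0 ∧ (∀ a, 0 ≤ ρ a) ∧ Continuous ρ := by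
  have hz : ρ 0 = 0 := by simpa using hsmul 0 0
  have hneg : ∀ a : A, ρ (-a) = ρ a := fun a => by simpa using hsmul (-1) a
  have hnn : ∀ a : A, 0 ≤ ρ a := by
    intro a
    have h' := hadd a (-a)
    rw [show a + -a = (0:A) by abel, hz, hneg] at h'
    linarith
  have key : ∀ a b : A, ρ a - ρ b ≤ K * ‖a - b‖ := by
    intro a b
    have e1 := hadd b (a - b)
    rw [show b + (a - b) = a by abel] at e1
    have e2 := hK (a - b)
    linarith
  refine ⟨hz, hnn, ?_⟩
  have hlip : LipschitzWith (Real.toNNReal K) ρ := by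
    apply LipschitzWith.of_dist_le_mul
    intro a b
    rw [Real.dist_eq, dist_eq_norm, abs_sub_le_iff]
    have hKle : K ≤ (Real.toNNReal K : ℝ) := Real.le_coe_toNNReal K
    have hn : (0:ℝ) ≤ ‖a - b‖ := norm_nonneg _
    constructor
    · have h1 := key a b
      nlinarith [mul_le_mul_of_nonneg_right hKle hn]
    · have h1 := key b a
      rw [norm_sub_rev] at h1
      nlinarith [mul_le_mul_of_nonneg_right hKle hn]
  exact hlip.continuous

theorem aux_rho_tsum_le {ι : Type*} {ρ : A → ℝ} (hcont : Continuous ρ) (hz : ρ 0 = 0)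
    (hadd : ∀ a b : A, ρ (a + b) ≤ ρ a + ρ b) (hnn : ∀ a : A, 0 ≤ ρ a)
    (g : ι → A) (hg : Summable g) (hρg : Summable fun i => ρ (g i)) :
    ρ (∑' i, g i) ≤ ∑' i, ρ (g i) := by
  have hfin : ∀ s : Finset ι, ρ (∑ i ∈ s, g i) ≤ ∑ i ∈ s, ρ (g i) := by
    intro s
    induction s using Finset.cons_induction with
    | empty => simp [hz]
    | cons i s hi ih =>
      rw [Finset.sum_cons, Finset.sum_cons]
      exact (hadd _ _).trans (by linarith)
  have h1 : Filter.Tendsto (fun s : Finset ι => ρ (∑ i ∈ s, g i)) Filter.atTop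
      (𝓝 (ρ (∑' i, g i))) := (hcont.tendsto _).comp hg.hasSum
  exact le_of_tendsto h1 (Filter.Eventually.of_forall fun s =>
    (hfin s).trans (Summable.sum_le_tsum s (fun i _ => hnn _) hρg))

theorem aux_key_bound {ι : Type*} (v : ι → A) (B : ℝ) (hB0 : 0 ≤ B)
    (hB : ∀ i, ‖v i‖ ≤ B)
    (hspan : Submodule.span ℂ (Set.range v) = ⊤) :
    ∃ M : ℝ, 0 < M ∧ ∀ (ρ : A → ℝ) (K : ℝ),
      (∀ a b : A, ρ (a + b) ≤ ρ a + ρ b) →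
      (∀ (c : ℂ) (a : A), ρ (c • a) = ‖c‖ * ρ a) →
      (∀ a : A, ρ a ≤ K * ‖a‖) →
      ∀ c : ℝ, 0 ≤ c → (∀ i, ρ (v i) ≤ c) → ∀ a : A, ρ a ≤ M * c * ‖a‖ := by
  classical
  haveI : Fact ((1:ENNReal) ≤ 1) := ⟨le_rfl⟩
  have hnorm : ∀ f : lp (fun _ : ι => ℂ) 1, ‖f‖ = ∑' i, ‖f i‖ := by
    intro f
    rw [lp.norm_eq_tsum_rpow (by norm_num) f]
    simp
  have hsumf : ∀ f : lp (fun _ : ι => ℂ) 1, Summable fun i => ‖f i‖ := by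
    intro f
    have := (lp.memℓp f).summable (by norm_num : (0:ℝ) < (1:ENNReal).toReal)
    simpa using this
  have hle : ∀ (f : lp (fun _ : ι => ℂ) 1) i, ‖f i • v i‖ ≤ B * ‖f i‖ := by
    intro f i
    rw [norm_smul, mul_comm]
    exact mul_le_mul_of_nonneg_right (hB i) (norm_nonneg _)
  have hsumg : ∀ f : lp (fun _ : ι => ℂ) 1, Summable fun i => f i • v i := by
    intro f
    exact Summable.of_norm_bounded ((hsumf f).mul_left B) (hle f)
  let Tl : lp (fun _ : ι => ℂ) 1 →ₗ[ℂ] A :=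
    { toFun := fun f => ∑' i, f i • v i
      map_add' := by
        intro f g
        have he : ∀ i, ((f + g : lp _ 1) i) • v i = f i • v i + g i • v i := by
          intro i
          rw [lp.coeFn_add]
          simp [add_smul]
        simp only [tsum_congr he]
        exact Summable.tsum_add (hsumg f) (hsumg g)
      map_smul' := by
        intro c f
        have he : ∀ i, ((c • f : lp _ 1) i) • v i = c • (f i • v i) := by
          intro i
          rw [lp.coeFn_smul]
          simp [mul_smul]
        simp only [tsum_congr he]
        exact Summable.tsum_const_smul c (hsumg f) }
  have hbound : ∀ f : lp (fun _ : ι => ℂ) 1, ‖Tl f‖ ≤ B * ‖f‖ := by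
    intro f
    have hs : Summable fun i => ‖f i • v i‖ :=
      Summable.of_nonneg_of_le (fun i => norm_nonneg _) (hle f) ((hsumf f).mul_left B)
    calc ‖∑' i, f i • v i‖ ≤ ∑' i, ‖f i • v i‖ := norm_tsum_le_tsum_norm hs
      _ ≤ ∑' i, B * ‖f i‖ := Summable.tsum_le_tsum (hle f) hs ((hsumf f).mul_left B)
      _ = B * ∑' i, ‖f i‖ := tsum_mul_left
      _ = B * ‖f‖ := by rw [hnorm f]
  let T : lp (fun _ : ι => ℂ) 1 →L[ℂ] A := Tl.mkContinuous B hbound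
  have hsurj : Function.Surjective T := by
    intro a
    have hrange : Set.range v ⊆ (LinearMap.range Tl : Set _) := by
      rintro _ ⟨i, rfl⟩
      refine ⟨lp.single 1 i 1, ?_⟩
      show ∑' j, (lp.single 1 i (1:ℂ) : ∀ _ : ι, ℂ) j • v j = v i
      rw [tsum_eq_single i]
      · rw [lp.single_apply_self]
        simp
      · intro j hj
        rw [lp.single_apply_ne _ _ _ hj, zero_smul]
    have hle' : Submodule.span ℂ (Set.range v) ≤ LinearMap.range Tl :=
      Submodule.span_le.mpr hrange
    have : a ∈ LinearMap.range Tl := hle' (hspan ▸ Submodule.mem_top)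
    obtain ⟨f, hf⟩ := this
    exact ⟨f, hf⟩
  obtain ⟨M, hM0, hMA⟩ := T.exists_preimage_norm_le hsurj
  refine ⟨M, hM0, ?_⟩
  intro ρ K hadd hsmul hK c hc hvc a
  obtain ⟨hz, hnn, hcont⟩ := aux_rho_basic A hadd hsmul hK
  obtain ⟨f, hfa, hfn⟩ := hMA a
  have hterm : ∀ i, ρ (f i • v i) ≤ c * ‖f i‖ := by
    intro i
    rw [hsmul, mul_comm]
    exact mul_le_mul_of_nonneg_right (hvc i) (norm_nonneg _)
  have hsum1 : Summable fun i => ρ (f i • v i) :=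
    Summable.of_nonneg_of_le (fun i => hnn _) hterm ((hsumf f).mul_left c)
  have hfa' : ∑' i, f i • v i = a := hfa
  have h1 : ρ a ≤ ∑' i, ρ (f i • v i) := by
    rw [← hfa']
    exact aux_rho_tsum_le A hcont hz hadd hnn _ (hsumg f) hsum1
  have h2 : (∑' i, ρ (f i • v i)) ≤ ∑' i, c * ‖f i‖ :=
    Summable.tsum_le_tsum hterm hsum1 ((hsumf f).mul_left c)
  have h3 : (∑' i, c * ‖f i‖) = c * ‖f‖ := by rw [tsum_mul_left, hnorm f]
  have h4 : c * ‖f‖ ≤ c * (M * ‖a‖) := mul_le_mul_of_nonneg_left hfn hc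
  calc ρ a ≤ c * ‖f‖ := by rw [← h3]; exact h1.trans h2
    _ ≤ c * (M * ‖a‖) := h4
    _ = M * c * ‖a‖ := by ring

/-- From the proof of Theorem 1.13 of the paper: if `A` is an algebraically simple
Banach algebra of dimension greater than one and `x ≠ 0`, then there is a
constant `C > 0` such that `ρ(x) ≥ C/k³` for every `k ≥ 1` and every nonzero
algebra seminorm `ρ` on `A` with `ρ(a) ≤ k‖a‖` for all `a`. -/
theorem seminorm_lower_bound
    (hsimple : ∀ I : Set A, IsIdealSet A I → I = {0} ∨ I = Set.univ)
    (hdim : 1 < Module.rank ℂ A) (x : A) (hx : x ≠ 0) :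
    ∃ C : ℝ, 0 < C ∧ ∀ k : ℕ, 1 ≤ k → ∀ ρ : A → ℝ,
      (∀ a b : A, ρ (a + b) ≤ ρ a + ρ b) →
      (∀ (c : ℂ) (a : A), ρ (c • a) = ‖c‖ * ρ a) →
      (∀ a b : A, ρ (a * b) ≤ ρ a * ρ b) →
      (∀ a : A, ρ a ≤ k * ‖a‖) → ρ ≠ 0 →
      C / (k : ℝ) ^ 3 ≤ ρ x := by
  classical
  -- ## Step 1: the span of all products is everything
  have hA2 : Submodule.span ℂ {z : A | ∃ a b : A, a * b = z} = ⊤ := by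
    set S : Set A := {z : A | ∃ a b : A, a * b = z} with hSdef
    have hIdeal : IsIdealSet A (Submodule.span ℂ S : Set A) := by
      refine ⟨Submodule.zero_mem _, fun p hp q hq => Submodule.add_mem _ hp hq,
        fun c p hp => Submodule.smul_mem _ c hp, fun z _ a => ?_⟩
      exact ⟨Submodule.subset_span ⟨a, z, rfl⟩, Submodule.subset_span ⟨z, a, rfl⟩⟩
    rcases hsimple _ hIdeal with h0 | huniv
    · exfalso
      have hprod : ∀ a b : A, a * b = 0 := by
        intro a b
        have hm : a * b ∈ (Submodule.span ℂ S : Set A) :=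
          Submodule.subset_span ⟨a, b, rfl⟩
        rw [h0] at hm
        exact hm
      have hnt : Nontrivial A := by
        have : (0 : Cardinal) < Module.rank ℂ A := lt_trans zero_lt_one hdim
        exact rank_pos_iff_nontrivial.mp this
      obtain ⟨v, hv⟩ := exists_ne (0 : A)
      have hJ : IsIdealSet A (Submodule.span ℂ ({v} : Set A) : Set A) := by
        refine ⟨Submodule.zero_mem _, fun p hp q hq => Submodule.add_mem _ hp hq,
          fun c p hp => Submodule.smul_mem _ c hp, fun z _ a => ?_⟩
        constructor
        · rw [hprod a z]; exact Submodule.zero_mem _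
        · rw [hprod z a]; exact Submodule.zero_mem _
      rcases hsimple _ hJ with h0' | huniv'
      · have : v ∈ ({0} : Set A) := by
          rw [← h0']
          exact Submodule.subset_span rfl
        exact hv this
      · have htop : Submodule.span ℂ ({v} : Set A) = ⊤ :=
          Submodule.eq_top_iff'.mpr fun z => by
            have : z ∈ (Submodule.span ℂ ({v} : Set A) : Set A) := by
              rw [huniv']; trivial
            exact this
        have hr : Module.rank ℂ A ≤ 1 := by
          have h1 := rank_span_le (R := ℂ) ({v} : Set A)
          rw [htop, rank_top] at h1
          simpa using h1
        exact absurd hdim (not_lt.mpr hr)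
    · exact Submodule.eq_top_iff'.mpr fun z => by
        have : z ∈ (Submodule.span ℂ S : Set A) := by rw [huniv]; trivial
        exact this
  -- ## Step 2: the span of the ideal generated by x is everything
  set Sx : Set A := {z : A | z = x ∨ (∃ a : A, a * x = z) ∨ (∃ a : A, x * a = z) ∨
      ∃ a b : A, a * x * b = z} with hSxdef
  have hSx_top : Submodule.span ℂ Sx = ⊤ := by
    have hIdeal : IsIdealSet A (Submodule.span ℂ Sx : Set A) := by
      refine ⟨Submodule.zero_mem _, fun p hp q hq => Submodule.add_mem _ hp hq,
        fun c p hp => Submodule.smul_mem _ c hp, fun z hz a => ?_⟩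
      have hz' : z ∈ Submodule.span ℂ Sx := hz
      clear hz
      constructor
      · show a * z ∈ Submodule.span ℂ Sx
        induction hz' using Submodule.span_induction with
        | mem w hw =>
          apply Submodule.subset_span
          rcases hw with rfl | ⟨b, rfl⟩ | ⟨b, rfl⟩ | ⟨b, c, rfl⟩
          · exact Or.inr (Or.inl ⟨a, rfl⟩)
          · exact Or.inr (Or.inl ⟨a * b, by rw [mul_assoc]⟩)
          · exact Or.inr (Or.inr (Or.inr ⟨a, b, by rw [mul_assoc]⟩))
          · exact Or.inr (Or.inr (Or.inr ⟨a * b, c, by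
              rw [mul_assoc a b x, mul_assoc, mul_assoc]⟩))
        | zero => rw [mul_zero]; exact Submodule.zero_mem _
        | add p q hp hq ihp ihq => rw [mul_add]; exact Submodule.add_mem _ ihp ihq
        | smul c p hp ih => rw [mul_smul_comm]; exact Submodule.smul_mem _ c ih
      · show z * a ∈ Submodule.span ℂ Sx
        induction hz' using Submodule.span_induction with
        | mem w hw =>
          apply Submodule.subset_span
          rcases hw with rfl | ⟨b, rfl⟩ | ⟨b, rfl⟩ | ⟨b, c, rfl⟩
          · exact Or.inr (Or.inr (Or.inl ⟨a, rfl⟩))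
          · exact Or.inr (Or.inr (Or.inr ⟨b, a, rfl⟩))
          · exact Or.inr (Or.inr (Or.inl ⟨b * a, by rw [mul_assoc]⟩))
          · exact Or.inr (Or.inr (Or.inr ⟨b, c * a, by
              rw [← mul_assoc]⟩))
        | zero => rw [zero_mul]; exact Submodule.zero_mem _
        | add p q hp hq ihp ihq => rw [add_mul]; exact Submodule.add_mem _ ihp ihq
        | smul c p hp ih => rw [smul_mul_assoc]; exact Submodule.smul_mem _ c ih
    rcases hsimple _ hIdeal with h0 | huniv
    · exfalso
      have : x ∈ ({0} : Set A) := by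
        rw [← h0]
        exact Submodule.subset_span (Or.inl rfl)
      exact hx this
    · exact Submodule.eq_top_iff'.mpr fun z => by
        have : z ∈ (Submodule.span ℂ Sx : Set A) := by rw [huniv]; trivial
        exact this
  -- ## Step 3: the two normalized generating families
  set v1 : A × A → A := fun p =>
    if p.1 = 0 ∨ p.2 = 0 then 0 else (((‖p.1‖ : ℂ)) * ((‖p.2‖ : ℂ)))⁻¹ • (p.1 * p.2)
    with hv1def
  have hv1B : ∀ p, ‖v1 p‖ ≤ 1 := by
    intro p
    by_cases h : p.1 = 0 ∨ p.2 = 0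
    · simp only [hv1def]
      rw [if_pos h, norm_zero]
      exact zero_le_one
    · push_neg at h
      obtain ⟨h1, h2⟩ := h
      have hn1 : (0:ℝ) < ‖p.1‖ := norm_pos_iff.mpr h1
      have hn2 : (0:ℝ) < ‖p.2‖ := norm_pos_iff.mpr h2
      simp only [hv1def]
      rw [if_neg (not_or.mpr ⟨h1, h2⟩), norm_smul, norm_inv]
      have : ‖((‖p.1‖ : ℂ)) * ((‖p.2‖ : ℂ))‖ = ‖p.1‖ * ‖p.2‖ := by
        rw [norm_mul, Complex.norm_real, Complex.norm_real,
          Real.norm_of_nonneg hn1.le, Real.norm_of_nonneg hn2.le]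
      rw [this]
      rw [inv_mul_le_iff₀ (by positivity), mul_one]
      exact norm_mul_le _ _
  have hv1span : Submodule.span ℂ (Set.range v1) = ⊤ := by
    rw [eq_top_iff, ← hA2, Submodule.span_le]
    rintro _ ⟨a, b, rfl⟩
    by_cases h : a = 0 ∨ b = 0
    · rcases h with rfl | rfl
      · rw [zero_mul]; exact Submodule.zero_mem _
      · rw [mul_zero]; exact Submodule.zero_mem _
    · push_neg at h
      obtain ⟨h1, h2⟩ := h
      have hn1 : (0:ℝ) < ‖a‖ := norm_pos_iff.mpr h1
      have hn2 : (0:ℝ) < ‖b‖ := norm_pos_iff.mpr h2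
      have hne : ((‖a‖ : ℂ)) * ((‖b‖ : ℂ)) ≠ 0 := by
        simp only [ne_eq, mul_eq_zero, Complex.ofReal_eq_zero]
        push_neg
        exact ⟨hn1.ne', hn2.ne'⟩
      have : a * b = (((‖a‖ : ℂ)) * ((‖b‖ : ℂ))) • v1 (a, b) := by
        simp only [hv1def]
        rw [if_neg (not_or.mpr ⟨h1, h2⟩), smul_smul, mul_inv_cancel₀ hne, one_smul]
      rw [this]
      exact Submodule.smul_mem _ _ (Submodule.subset_span ⟨(a, b), rfl⟩)
  obtain ⟨M1, hM1, hM1p⟩ := aux_key_bound A v1 1 zero_le_one hv1B hv1span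
  -- the second family
  set nb : A → A → A := fun a z => if a = 0 then 0 else ((‖a‖ : ℂ))⁻¹ • z with hnbdef
  set v2 : Unit ⊕ A ⊕ A ⊕ A × A → A :=
    Sum.elim (fun _ => x) (Sum.elim (fun a => nb a (a * x))
      (Sum.elim (fun a => nb a (x * a)) (fun p => if p.1 = 0 ∨ p.2 = 0 then 0 else
        (((‖p.1‖ : ℂ)) * ((‖p.2‖ : ℂ)))⁻¹ • (p.1 * x * p.2)))) with hv2def
  have hnbnorm : ∀ (a z : A), ‖z‖ ≤ ‖a‖ * ‖x‖ → ‖nb a z‖ ≤ ‖x‖ := by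
    intro a z hz
    by_cases h : a = 0
    · simp [hnbdef, h]
    · have hn : (0:ℝ) < ‖a‖ := norm_pos_iff.mpr h
      simp only [hnbdef, if_neg h]
      rw [norm_smul, norm_inv, Complex.norm_real, Real.norm_of_nonneg hn.le]
      rw [inv_mul_le_iff₀ hn]
      linarith [hz]
  have hv2B : ∀ i, ‖v2 i‖ ≤ ‖x‖ := by
    rintro (⟨⟩ | a | a | p)
    · simp [hv2def]
    · exact hnbnorm a _ (norm_mul_le a x)
    · exact hnbnorm a _ ((norm_mul_le x a).trans (le_of_eq (mul_comm _ _)))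
    · by_cases h : p.1 = 0 ∨ p.2 = 0
      · simp only [hv2def, Sum.elim_inr]
        rw [if_pos h, norm_zero]
        exact norm_nonneg x
      · push_neg at h
        obtain ⟨h1, h2⟩ := h
        have hn1 : (0:ℝ) < ‖p.1‖ := norm_pos_iff.mpr h1
        have hn2 : (0:ℝ) < ‖p.2‖ := norm_pos_iff.mpr h2
        simp only [hv2def, Sum.elim_inr]
        rw [if_neg (not_or.mpr ⟨h1, h2⟩), norm_smul, norm_inv]
        have he : ‖((‖p.1‖ : ℂ)) * ((‖p.2‖ : ℂ))‖ = ‖p.1‖ * ‖p.2‖ := by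
          rw [norm_mul, Complex.norm_real, Complex.norm_real,
            Real.norm_of_nonneg hn1.le, Real.norm_of_nonneg hn2.le]
        rw [he, inv_mul_le_iff₀ (by positivity)]
        calc ‖p.1 * x * p.2‖ ≤ ‖p.1 * x‖ * ‖p.2‖ := norm_mul_le _ _
          _ ≤ ‖p.1‖ * ‖x‖ * ‖p.2‖ := by
            exact mul_le_mul_of_nonneg_right (norm_mul_le _ _) (norm_nonneg _)
          _ = ‖p.1‖ * ‖p.2‖ * ‖x‖ := by ring
  have hv2span : Submodule.span ℂ (Set.range v2) = ⊤ := by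
    rw [eq_top_iff, ← hSx_top, Submodule.span_le]
    intro z hz
    rcases hz with rfl | ⟨a, rfl⟩ | ⟨a, rfl⟩ | ⟨a, b, rfl⟩
    · exact Submodule.subset_span ⟨Sum.inl (), rfl⟩
    · by_cases h : a = 0
      · rw [h, zero_mul]; exact Submodule.zero_mem _
      · have hn : (0:ℝ) < ‖a‖ := norm_pos_iff.mpr h
        have hne : ((‖a‖ : ℂ)) ≠ 0 := by
          simpa [Complex.ofReal_eq_zero] using hn.ne'
        have : a * x = ((‖a‖ : ℂ)) • v2 (Sum.inr (Sum.inl a)) := by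
          simp only [hv2def, Sum.elim_inr, Sum.elim_inl, hnbdef]
          rw [if_neg h, smul_smul, mul_inv_cancel₀ hne, one_smul]
        rw [this]
        exact Submodule.smul_mem _ _ (Submodule.subset_span ⟨_, rfl⟩)
    · by_cases h : a = 0
      · rw [h, mul_zero]; exact Submodule.zero_mem _
      · have hn : (0:ℝ) < ‖a‖ := norm_pos_iff.mpr h
        have hne : ((‖a‖ : ℂ)) ≠ 0 := by
          simpa [Complex.ofReal_eq_zero] using hn.ne'
        have : x * a = ((‖a‖ : ℂ)) • v2 (Sum.inr (Sum.inr (Sum.inl a))) := by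
          simp only [hv2def, Sum.elim_inr, Sum.elim_inl, hnbdef]
          rw [if_neg h, smul_smul, mul_inv_cancel₀ hne, one_smul]
        rw [this]
        exact Submodule.smul_mem _ _ (Submodule.subset_span ⟨_, rfl⟩)
    · by_cases h : a = 0 ∨ b = 0
      · rcases h with rfl | rfl
        · rw [zero_mul, zero_mul]; exact Submodule.zero_mem _
        · rw [mul_zero]; exact Submodule.zero_mem _
      · push_neg at h
        obtain ⟨h1, h2⟩ := h
        have hn1 : (0:ℝ) < ‖a‖ := norm_pos_iff.mpr h1
        have hn2 : (0:ℝ) < ‖b‖ := norm_pos_iff.mpr h2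
        have hne : ((‖a‖ : ℂ)) * ((‖b‖ : ℂ)) ≠ 0 := by
          simp only [ne_eq, mul_eq_zero, Complex.ofReal_eq_zero]
          push_neg
          exact ⟨hn1.ne', hn2.ne'⟩
        have : a * x * b = (((‖a‖ : ℂ)) * ((‖b‖ : ℂ))) •
            v2 (Sum.inr (Sum.inr (Sum.inr (a, b)))) := by
          simp only [hv2def, Sum.elim_inr]
          rw [if_neg (not_or.mpr ⟨h1, h2⟩), smul_smul, mul_inv_cancel₀ hne, one_smul]
        rw [this]
        exact Submodule.smul_mem _ _ (Submodule.subset_span ⟨_, rfl⟩)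
  obtain ⟨M2, hM2, hM2p⟩ := aux_key_bound A v2 ‖x‖ (norm_nonneg x) hv2B hv2span
  -- ## Step 4: put everything together
  refine ⟨1 / (M1 * M2), by positivity, ?_⟩
  intro k hk ρ hadd hsmul hmul hKb hρne
  obtain ⟨hz, hnn, hcont⟩ := aux_rho_basic A hadd hsmul hKb
  have hk1 : (1:ℝ) ≤ (k:ℝ) := by exact_mod_cast hk
  have hkpos : (0:ℝ) < (k:ℝ) := lt_of_lt_of_le zero_lt_one hk1
  -- the sup of ρ on the unit ball
  set SB : Set ℝ := {r : ℝ | ∃ a : A, ‖a‖ ≤ 1 ∧ ρ a = r} with hSBdef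
  have hSBne : SB.Nonempty := ⟨ρ 0, 0, by simp, rfl⟩
  have hSBbdd : BddAbove SB := by
    refine ⟨(k:ℝ), ?_⟩
    rintro r ⟨a, ha, rfl⟩
    calc ρ a ≤ (k:ℝ) * ‖a‖ := hKb a
      _ ≤ (k:ℝ) * 1 := mul_le_mul_of_nonneg_left ha hkpos.le
      _ = (k:ℝ) := mul_one _
  set s : ℝ := sSup SB with hsdef
  have hs_le : ∀ a : A, ‖a‖ ≤ 1 → ρ a ≤ s := fun a ha => le_csSup hSBbdd ⟨a, ha, rfl⟩
  have hs_nn : 0 ≤ s := by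
    have : ρ 0 ≤ s := hs_le 0 (by simp)
    rwa [hz] at this
  -- `ρ a ≤ s * ‖a‖` for all `a`
  have hs_lin : ∀ a : A, ρ a ≤ s * ‖a‖ := by
    intro a
    by_cases h : a = 0
    · simp [h, hz]
    · have hn : (0:ℝ) < ‖a‖ := norm_pos_iff.mpr h
      have hne : ((‖a‖ : ℂ)) ≠ 0 := by
        simpa [Complex.ofReal_eq_zero] using hn.ne'
      have hunit : ‖((‖a‖ : ℂ))⁻¹ • a‖ ≤ 1 := by
        rw [norm_smul, norm_inv, Complex.norm_real, Real.norm_of_nonneg hn.le]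
        rw [inv_mul_le_iff₀ hn, mul_one]
      have he : ρ (((‖a‖ : ℂ))⁻¹ • a) = ‖a‖⁻¹ * ρ a := by
        rw [hsmul, norm_inv, Complex.norm_real, Real.norm_of_nonneg hn.le]
      have := hs_le _ hunit
      rw [he] at this
      calc ρ a = ‖a‖ * (‖a‖⁻¹ * ρ a) := by field_simp
        _ ≤ ‖a‖ * s := mul_le_mul_of_nonneg_left this hn.le
        _ = s * ‖a‖ := mul_comm _ _
  -- `s > 0`
  have hs_pos : 0 < s := by
    by_contra hcon
    push_neg at hcon
    have hs0 : s = 0 := le_antisymm hcon hs_nn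
    apply hρne
    funext a
    have h1 := hs_lin a
    rw [hs0, zero_mul] at h1
    exact le_antisymm h1 (hnn a)
  -- bound for the first family: `ρ (v1 p) ≤ s ^ 2`
  have hv1ρ : ∀ p : A × A, ρ (v1 p) ≤ s ^ 2 := by
    intro p
    by_cases h : p.1 = 0 ∨ p.2 = 0
    · simp only [hv1def]
      rw [if_pos h, hz]
      positivity
    · push_neg at h
      obtain ⟨h1, h2⟩ := h
      have hn1 : (0:ℝ) < ‖p.1‖ := norm_pos_iff.mpr h1
      have hn2 : (0:ℝ) < ‖p.2‖ := norm_pos_iff.mpr h2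
      simp only [hv1def]
      rw [if_neg (not_or.mpr ⟨h1, h2⟩), hsmul, norm_inv]
      have he : ‖((‖p.1‖ : ℂ)) * ((‖p.2‖ : ℂ))‖ = ‖p.1‖ * ‖p.2‖ := by
        rw [norm_mul, Complex.norm_real, Complex.norm_real,
          Real.norm_of_nonneg hn1.le, Real.norm_of_nonneg hn2.le]
      rw [he, inv_mul_le_iff₀ (by positivity)]
      calc ρ (p.1 * p.2) ≤ ρ p.1 * ρ p.2 := hmul _ _
        _ ≤ (s * ‖p.1‖) * (s * ‖p.2‖) := by
          exact mul_le_mul (hs_lin _) (hs_lin _) (hnn _) (by positivity)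
        _ = ‖p.1‖ * ‖p.2‖ * s ^ 2 := by ring
  -- bound for the second family: `ρ (v2 i) ≤ k ^ 2 * ρ x`
  have hv2ρ : ∀ i, ρ (v2 i) ≤ (k:ℝ) ^ 2 * ρ x := by
    have hk2 : (1:ℝ) ≤ (k:ℝ) ^ 2 := by nlinarith
    have hkk : (k:ℝ) ≤ (k:ℝ) ^ 2 := by nlinarith
    rintro (⟨⟩ | a | a | p)
    · simp only [hv2def, Sum.elim_inl]
      nlinarith [hnn x]
    · by_cases h : a = 0
      · simp only [hv2def, Sum.elim_inr, Sum.elim_inl, hnbdef]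
        rw [if_pos h, hz]
        exact mul_nonneg (by positivity) (hnn x)
      · have hn : (0:ℝ) < ‖a‖ := norm_pos_iff.mpr h
        simp only [hv2def, Sum.elim_inr, Sum.elim_inl, hnbdef]
        rw [if_neg h, hsmul, norm_inv, Complex.norm_real, Real.norm_of_nonneg hn.le,
          inv_mul_le_iff₀ hn]
        calc ρ (a * x) ≤ ρ a * ρ x := hmul _ _
          _ ≤ ((k:ℝ) * ‖a‖) * ρ x := mul_le_mul_of_nonneg_right (hKb a) (hnn x)
          _ ≤ ‖a‖ * ((k:ℝ) ^ 2 * ρ x) := by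
            nlinarith [mul_le_mul_of_nonneg_right hkk (mul_nonneg hn.le (hnn x))]
    · by_cases h : a = 0
      · simp only [hv2def, Sum.elim_inr, Sum.elim_inl, hnbdef]
        rw [if_pos h, hz]
        exact mul_nonneg (by positivity) (hnn x)
      · have hn : (0:ℝ) < ‖a‖ := norm_pos_iff.mpr h
        simp only [hv2def, Sum.elim_inr, Sum.elim_inl, hnbdef]
        rw [if_neg h, hsmul, norm_inv, Complex.norm_real, Real.norm_of_nonneg hn.le,
          inv_mul_le_iff₀ hn]
        calc ρ (x * a) ≤ ρ x * ρ a := hmul _ _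
          _ ≤ ρ x * ((k:ℝ) * ‖a‖) := mul_le_mul_of_nonneg_left (hKb a) (hnn x)
          _ ≤ ‖a‖ * ((k:ℝ) ^ 2 * ρ x) := by
            nlinarith [mul_le_mul_of_nonneg_right hkk (mul_nonneg hn.le (hnn x))]
    · by_cases h : p.1 = 0 ∨ p.2 = 0
      · simp only [hv2def, Sum.elim_inr]
        rw [if_pos h, hz]
        exact mul_nonneg (by positivity) (hnn x)
      · push_neg at h
        obtain ⟨h1, h2⟩ := h
        have hn1 : (0:ℝ) < ‖p.1‖ := norm_pos_iff.mpr h1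
        have hn2 : (0:ℝ) < ‖p.2‖ := norm_pos_iff.mpr h2
        simp only [hv2def, Sum.elim_inr]
        rw [if_neg (not_or.mpr ⟨h1, h2⟩), hsmul, norm_inv]
        have he : ‖((‖p.1‖ : ℂ)) * ((‖p.2‖ : ℂ))‖ = ‖p.1‖ * ‖p.2‖ := by
          rw [norm_mul, Complex.norm_real, Complex.norm_real,
            Real.norm_of_nonneg hn1.le, Real.norm_of_nonneg hn2.le]
        rw [he, inv_mul_le_iff₀ (by positivity)]
        calc ρ (p.1 * x * p.2) ≤ ρ (p.1 * x) * ρ p.2 := hmul _ _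
          _ ≤ (ρ p.1 * ρ x) * ρ p.2 :=
            mul_le_mul_of_nonneg_right (hmul _ _) (hnn _)
          _ ≤ (((k:ℝ) * ‖p.1‖) * ρ x) * ((k:ℝ) * ‖p.2‖) := by
            refine mul_le_mul ?_ (hKb _) (hnn _) (mul_nonneg (by positivity) (hnn x))
            exact mul_le_mul_of_nonneg_right (hKb _) (hnn x)
          _ = ‖p.1‖ * ‖p.2‖ * ((k:ℝ) ^ 2 * ρ x) := by ring
  -- apply the a priori bound twice
  have hB1 : ∀ a : A, ρ a ≤ M1 * s ^ 2 * ‖a‖ :=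
    hM1p ρ (k:ℝ) hadd hsmul hKb (s ^ 2) (by positivity) hv1ρ
  have hB2 : ∀ a : A, ρ a ≤ M2 * ((k:ℝ) ^ 2 * ρ x) * ‖a‖ :=
    hM2p ρ (k:ℝ) hadd hsmul hKb ((k:ℝ) ^ 2 * ρ x) (mul_nonneg (by positivity) (hnn x)) hv2ρ
  have hs_le1 : s ≤ M1 * s ^ 2 := by
    apply csSup_le hSBne
    rintro r ⟨a, ha, rfl⟩
    calc ρ a ≤ M1 * s ^ 2 * ‖a‖ := hB1 a
      _ ≤ M1 * s ^ 2 * 1 := by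
        exact mul_le_mul_of_nonneg_left ha (by positivity)
      _ = M1 * s ^ 2 := mul_one _
  have hs_le2 : s ≤ M2 * ((k:ℝ) ^ 2 * ρ x) := by
    apply csSup_le hSBne
    rintro r ⟨a, ha, rfl⟩
    have hnnx := hnn x
    calc ρ a ≤ M2 * ((k:ℝ) ^ 2 * ρ x) * ‖a‖ := hB2 a
      _ ≤ M2 * ((k:ℝ) ^ 2 * ρ x) * 1 := by
        exact mul_le_mul_of_nonneg_left ha (by positivity)
      _ = M2 * ((k:ℝ) ^ 2 * ρ x) := mul_one _
  have h1s : 1 ≤ M1 * s := by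
    have := hs_le1
    nlinarith [hs_pos]
  -- conclude
  have hstep : 1 ≤ M1 * (M2 * ((k:ℝ) ^ 2 * ρ x)) := by
    calc (1:ℝ) ≤ M1 * s := h1s
      _ ≤ M1 * (M2 * ((k:ℝ) ^ 2 * ρ x)) := mul_le_mul_of_nonneg_left hs_le2 hM1.le
  have hk3 : (k:ℝ) ^ 2 ≤ (k:ℝ) ^ 3 := by nlinarith
  have hxnn := hnn x
  have hfin : 1 ≤ M1 * M2 * (k:ℝ) ^ 3 * ρ x := by
    nlinarith [mul_le_mul_of_nonneg_left hk3
      (mul_nonneg (mul_nonneg hM1.le hM2.le) hxnn)]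
  rw [div_div, div_le_iff₀ (by positivity)]
  nlinarith

end BanachAlgebraPrelude
end
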